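/- arXiv:1807.07237 — 13 statements merged into one kernel-verified Lean document; each statement's English description precedes it below -/
import Mathlib

section
/- Let ν and ν' be discrete probability distributions on the real line supported on finite sets S and S' respectively, and let ε be the minimum of the smallest point mass of ν and the smallest point mass of ν'. Then the Hausdorff distance between S and S' is at most W₁(ν,ν')/ε, where W₁ denotes the 1-Wasserstein distance. -/
/- The mass `ν {x} ≥ ε` sitting at a point `x ∈ S` must be transported by any coupling to points
of `S'`, each at distance at least `infDist x S'`, so the transport cost is at least
`ε · infDist x S'`; symmetrically for `x ∈ S'`. Hence `ε · d_H(S, S')` is at most the cost of every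
coupling, and so at most `W₁(ν, ν')`. -/

open MeasureTheory

/-- The 1-Wasserstein distance between two measures on `ℝ`, defined as the infimum of
`E|X - Y|` over all couplings. -/
noncomputable def W1 (μ ν : Measure ℝ) : ℝ :=
  sInf {c : ℝ | ∃ π : Measure (ℝ × ℝ), IsProbabilityMeasure π ∧
    π.map Prod.fst = μ ∧ π.map Prod.snd = ν ∧ c = ∫ p, |p.1 - p.2| ∂π}

theorem integral_abs_sub_map_swap (π : Measure (ℝ × ℝ)) :
    ∫ p, |p.1 - p.2| ∂(π.map Prod.swap) = ∫ p, |p.1 - p.2| ∂π := by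
  rw [integral_map (f := fun p : ℝ × ℝ => |p.1 - p.2|) measurable_swap.aemeasurable
    (continuous_fst.sub continuous_snd).abs.aestronglyMeasurable]
  simp only [Prod.fst_swap, Prod.snd_swap, abs_sub_comm]

structure IsCoupling (π : Measure (ℝ × ℝ)) (μ ν : Measure ℝ) : Prop where
  map_fst : π.map Prod.fst = μ
  map_snd : π.map Prod.snd = ν

namespace IsCoupling

variable {π : Measure (ℝ × ℝ)} {μ ν : Measure ℝ}

theorem swap (h : IsCoupling π μ ν) : IsCoupling (π.map Prod.swap) ν μ where
  map_fst := by rw [Measure.map_map measurable_fst measurable_swap]; exact h.map_snd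
  map_snd := by rw [Measure.map_map measurable_snd measurable_swap]; exact h.map_fst

theorem ae_fst_mem (h : IsCoupling π μ ν) {s : Set ℝ} (hs : ∀ᵐ x ∂μ, x ∈ s) :
    ∀ᵐ p ∂π, p.1 ∈ s :=
  ae_of_ae_map measurable_fst.aemeasurable (h.map_fst ▸ hs)

theorem ae_snd_mem (h : IsCoupling π μ ν) {t : Set ℝ} (ht : ∀ᵐ y ∂ν, y ∈ t) :
    ∀ᵐ p ∂π, p.2 ∈ t :=
  ae_of_ae_map measurable_snd.aemeasurable (h.map_snd ▸ ht)

theorem integrable_abs_sub [IsFiniteMeasure π] (h : IsCoupling π μ ν) {s t : Set ℝ}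
    (hs : IsCompact s) (ht : IsCompact t) (hμ : ∀ᵐ x ∂μ, x ∈ s)
    (hν : ∀ᵐ y ∂ν, y ∈ t) : Integrable (fun p : ℝ × ℝ => |p.1 - p.2|) π := by
  have hst : ∀ᵐ p ∂π, p ∈ s ×ˢ t := by
    filter_upwards [h.ae_fst_mem hμ, h.ae_snd_mem hν] with p hp hq using ⟨hp, hq⟩
  rw [← Measure.restrict_eq_self_of_ae_mem hst]
  exact (continuous_fst.sub continuous_snd).abs.continuousOn.integrableOn_compact (hs.prod ht)

theorem infDist_mul_le_integral [IsFiniteMeasure π] (h : IsCoupling π μ ν) {t : Set ℝ}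
    (ht : ∀ᵐ y ∂ν, y ∈ t) (hint : Integrable (fun p : ℝ × ℝ => |p.1 - p.2|) π)
    (x : ℝ) :
    Metric.infDist x t * (μ {x}).toReal ≤ ∫ p, |p.1 - p.2| ∂π := by
  have hA : MeasurableSet (Prod.fst ⁻¹' {x} : Set (ℝ × ℝ)) :=
    measurable_fst (measurableSet_singleton x)
  have hμx : μ {x} = π (Prod.fst ⁻¹' {x}) := by
    rw [← h.map_fst, Measure.map_apply measurable_fst (measurableSet_singleton x)]
  have hcost :
      ∀ᵐ p ∂π.restrict (Prod.fst ⁻¹' {x}), Metric.infDist x t ≤ |p.1 - p.2| := by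
    filter_upwards [ae_restrict_mem hA, ae_restrict_of_ae (h.ae_snd_mem ht)] with p hp1 hp2
    rw [show p.1 = x from hp1, ← Real.dist_eq]
    exact Metric.infDist_le_dist_of_mem hp2
  calc Metric.infDist x t * (μ {x}).toReal
      = ∫ _ in Prod.fst ⁻¹' {x}, Metric.infDist x t ∂π := by
        rw [setIntegral_const, smul_eq_mul, mul_comm, hμx, measureReal_def]
    _ ≤ ∫ p in Prod.fst ⁻¹' {x}, |p.1 - p.2| ∂π :=
        integral_mono_ae (integrable_const _) hint.integrableOn hcost
    _ ≤ ∫ p, |p.1 - p.2| ∂π :=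
        setIntegral_le_integral hint (Filter.Eventually.of_forall fun p => abs_nonneg _)

theorem hausdorffDist_le_integral_div [IsFiniteMeasure π] (h : IsCoupling π μ ν) {s t : Set ℝ}
    (hs : IsCompact s) (ht : IsCompact t) (hμ : ∀ᵐ x ∂μ, x ∈ s) (hν : ∀ᵐ y ∂ν, y ∈ t)
    {ε : ℝ} (hε : 0 < ε) (hμε : ∀ x ∈ s, ε ≤ (μ {x}).toReal)
    (hνε : ∀ y ∈ t, ε ≤ (ν {y}).toReal) :
    Metric.hausdorffDist s t ≤ (∫ p, |p.1 - p.2| ∂π) / ε := by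
  have hint := h.integrable_abs_sub hs ht hμ hν
  have hint' := h.swap.integrable_abs_sub ht hs hν hμ
  refine Metric.hausdorffDist_le_of_infDist
    (div_nonneg (integral_nonneg fun _ => abs_nonneg _) hε.le) (fun x hx => ?_) (fun y hy => ?_)
  · rw [le_div_iff₀ hε]
    calc Metric.infDist x t * ε ≤ Metric.infDist x t * (μ {x}).toReal := by
          gcongr; exacts [Metric.infDist_nonneg, hμε x hx]
      _ ≤ ∫ p, |p.1 - p.2| ∂π := h.infDist_mul_le_integral hν hint x
  · rw [le_div_iff₀ hε, ← integral_abs_sub_map_swap]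
    calc Metric.infDist y s * ε ≤ Metric.infDist y s * (ν {y}).toReal := by
          gcongr; exacts [Metric.infDist_nonneg, hνε y hy]
      _ ≤ _ := h.swap.infDist_mul_le_integral hμ hint' y

end IsCoupling

theorem le_W1_of_forall_isCoupling {μ ν : Measure ℝ} [IsProbabilityMeasure μ]
    [IsProbabilityMeasure ν] {c : ℝ}
    (hc : ∀ π : Measure (ℝ × ℝ), IsProbabilityMeasure π → IsCoupling π μ ν →
      c ≤ ∫ p, |p.1 - p.2| ∂π) :
    c ≤ W1 μ ν := by
  refine le_csInf ⟨_, μ.prod ν, inferInstance, ?_, ?_, rfl⟩ ?_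
  · rw [← Measure.fst, Measure.fst_prod]
  · rw [← Measure.snd, Measure.snd_prod]
  rintro _ ⟨π, hπ, h1, h2, rfl⟩
  exact hc π hπ ⟨h1, h2⟩

theorem stmt_0 (ν ν' : Measure ℝ) [IsProbabilityMeasure ν] [IsProbabilityMeasure ν']
    (S S' : Finset ℝ) (hS : S.Nonempty) (hS' : S'.Nonempty)
    (hsupp : ν ↑S = 1) (hsupp' : ν' ↑S' = 1)
    (hpos : ∀ x ∈ S, 0 < ν {x}) (hpos' : ∀ x ∈ S', 0 < ν' {x})
    (ε : ℝ)
    (hε : ε = min (S.inf' hS fun x => (ν {x}).toReal)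
                  (S'.inf' hS' fun x => (ν' {x}).toReal)) :
    Metric.hausdorffDist (↑S : Set ℝ) (↑S' : Set ℝ) ≤ W1 ν ν' / ε := by
  have hmass_pos : ∀ (μ : Measure ℝ) [IsFiniteMeasure μ] (T : Finset ℝ) (hT : T.Nonempty),
      (∀ x ∈ T, 0 < μ {x}) → 0 < T.inf' hT fun x => (μ {x}).toReal :=
    fun μ _ T hT h => (Finset.lt_inf'_iff hT).2 fun x hx =>
      ENNReal.toReal_pos (h x hx).ne' (measure_ne_top _ _)
  have hεpos : 0 < ε := hε ▸ lt_min (hmass_pos ν S hS hpos) (hmass_pos ν' S' hS' hpos')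
  have hεν : ∀ x ∈ S, ε ≤ (ν {x}).toReal := fun x hx =>
    hε ▸ (min_le_left _ _).trans (Finset.inf'_le _ hx)
  have hεν' : ∀ x ∈ S', ε ≤ (ν' {x}).toReal := fun x hx =>
    hε ▸ (min_le_right _ _).trans (Finset.inf'_le _ hx)
  rw [le_div_iff₀ hεpos]
  refine le_W1_of_forall_isCoupling fun π _ hπ => (le_div_iff₀ hεpos).1 ?_
  exact hπ.hausdorffDist_le_integral_div S.finite_toSet.isCompact S'.finite_toSet.isCompact
    (mem_ae_iff.2 ((prob_compl_eq_zero_iff S.measurableSet).2 hsupp))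
    (mem_ae_iff.2 ((prob_compl_eq_zero_iff S'.measurableSet).2 hsupp')) hεpos hεν hεν'
end

section
/- Let ν and ν' be two probability distributions on ℝ, each supported on at most k points. If the j-th moments of ν and ν' agree for all j = 1, …, 2k−1, then ν = ν'. -/
open MeasureTheory

open Finset in
lemma finset_measure_sum (ν : Measure ℝ) (T : Finset ℝ) :
    ν ↑T = ∑ x ∈ T, ν {x} := by
  have : ↑T = ⋃ x ∈ T, ({x} : Set ℝ) := by ext x; simp
  rw [this, measure_biUnion_finset]
  · intro x hx y hy hxy
    simpa using hxy
  · intro x _; exact measurableSet_singleton x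

open Finset in
lemma meas_eq_sum_dirac (ν : Measure ℝ) [IsProbabilityMeasure ν] (T : Finset ℝ)
    (hT : ν ↑T = 1) : ν = ∑ x ∈ T, ν {x} • Measure.dirac x := by
  classical
  have hTc : ν (↑T)ᶜ = 0 := by
    have h := measure_compl (T.measurableSet) (measure_ne_top ν _)
    rw [hT, measure_univ] at h
    simpa using h
  ext A hA
  have h1 : ν A = ν (A ∩ ↑T) := by
    refine le_antisymm ?_ (measure_mono Set.inter_subset_left)
    calc ν A ≤ ν (A ∩ ↑T) + ν (A \ ↑T) := measure_le_inter_add_diff ν A ↑T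
      _ = ν (A ∩ ↑T) := by
          rw [measure_mono_null (Set.diff_subset_compl A ↑T) hTc, add_zero]
  have h2 : A ∩ ↑T = ↑(T.filter (· ∈ A)) := by
    ext x; simp [and_comm]
  rw [h1, h2, finset_measure_sum, Measure.finset_sum_apply]
  rw [Finset.sum_filter]
  refine Finset.sum_congr rfl fun x _ => ?_
  rw [Measure.smul_apply, Measure.dirac_apply' _ hA]
  by_cases hx : x ∈ A <;> simp [hx, Set.indicator_of_mem, Set.indicator_of_notMem]

lemma integral_eq_sum (ν : Measure ℝ) [IsProbabilityMeasure ν] (T : Finset ℝ)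
    (hT : ν ↑T = 1) (g : ℝ → ℝ) (hg : Measurable g) :
    ∫ x, g x ∂ν = ∑ x ∈ T, (ν {x}).toReal * g x := by
  conv_lhs => rw [meas_eq_sum_dirac ν T hT]
  rw [integral_finset_sum_measure]
  · refine Finset.sum_congr rfl fun x _ => ?_
    rw [integral_smul_measure, integral_dirac' _ _ hg.stronglyMeasurable, smul_eq_mul]
  · intro x _
    have hdint : Integrable g (Measure.dirac x) := by
      refine ⟨hg.aestronglyMeasurable, ?_⟩
      simp [HasFiniteIntegral, lintegral_dirac]
    exact hdint.smul_measure (measure_ne_top ν _)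

open Finset Polynomial in
lemma sum_mul_basis (T : Finset ℝ) (a : ℝ → ℝ) {y : ℝ} (hy : y ∈ T) :
    ∑ x ∈ T, a x * (Lagrange.basis T id y).eval x = a y := by
  rw [Finset.sum_eq_single y]
  · have h := Lagrange.eval_basis_self (v := id) (Set.injOn_id _) hy
    simp only [id] at h
    rw [h, mul_one]
  · intro x hx hxy
    have := Lagrange.eval_basis_of_ne (v := id) (Ne.symm hxy) hx
    simp only [id] at this
    rw [this, mul_zero]
  · intro h; exact absurd hy h

theorem stmt_2 (k : ℕ) (ν ν' : Measure ℝ) [IsProbabilityMeasure ν] [IsProbabilityMeasure ν']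
    (S S' : Finset ℝ) (hcard : S.card ≤ k) (hcard' : S'.card ≤ k)
    (hsupp : ν ↑S = 1) (hsupp' : ν' ↑S' = 1)
    (hm : ∀ j, 1 ≤ j → j ≤ 2 * k - 1 → ∫ x, x ^ j ∂ν = ∫ x, x ^ j ∂ν') :
    ν = ν' := by
  classical
  -- k = 0 is impossible
  rcases Nat.eq_zero_or_pos k with hk | hk
  · subst hk
    interval_cases h : S.card
    rw [Finset.card_eq_zero] at h
    subst h
    simp at hsupp
  set T : Finset ℝ := S ∪ S' with hTdef
  have hT : ν ↑T = 1 := le_antisymm prob_le_one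
    (hsupp ▸ measure_mono (by exact_mod_cast Finset.subset_union_left))
  have hT' : ν' ↑T = 1 := le_antisymm prob_le_one
    (hsupp' ▸ measure_mono (by exact_mod_cast Finset.subset_union_right))
  have hTcard : T.card ≤ 2 * k := le_trans (Finset.card_union_le S S')
    (by omega)
  have hTne : T.Nonempty := by
    rcases Finset.eq_empty_or_nonempty T with h | h
    · rw [h] at hT; simp at hT
    · exact h
  -- moment sums agree for all j < 2k
  have hmom : ∀ j ∈ Finset.range (2 * k),
      ∑ x ∈ T, (ν {x}).toReal * x ^ j = ∑ x ∈ T, (ν' {x}).toReal * x ^ j := by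
    intro j hj
    rw [Finset.mem_range] at hj
    rcases Nat.eq_zero_or_pos j with hj0 | hj1
    · subst hj0
      have h1 : ∫ x, (x : ℝ) ^ 0 ∂ν = ∫ x, (x : ℝ) ^ 0 ∂ν' := by
        simp
      rw [integral_eq_sum ν T hT (fun x => x ^ 0) (by fun_prop),
        integral_eq_sum ν' T hT' (fun x => x ^ 0) (by fun_prop)] at h1
      exact h1
    · have h1 := hm j hj1 (by omega)
      rw [integral_eq_sum ν T hT (fun x => x ^ j) (by fun_prop),
        integral_eq_sum ν' T hT' (fun x => x ^ j) (by fun_prop)] at h1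
      exact h1
  -- singleton masses agree
  have hsingle : ∀ y ∈ T, ν {y} = ν' {y} := by
    intro y hy
    set p := Lagrange.basis T id y with hp
    have hdeg : p.natDegree < 2 * k := by
      have := Lagrange.natDegree_basis (Set.injOn_id (↑T : Set ℝ)) hy
      rw [hp, this]
      have := Finset.card_pos.mpr hTne
      omega
    have key : ∀ (μ : Measure ℝ), ∑ x ∈ T, (μ {x}).toReal * p.eval x
        = ∑ j ∈ Finset.range (2 * k), p.coeff j * ∑ x ∈ T, (μ {x}).toReal * x ^ j := by
      intro μ
      calc ∑ x ∈ T, (μ {x}).toReal * p.eval x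
          = ∑ x ∈ T, ∑ j ∈ Finset.range (2 * k), (μ {x}).toReal * (p.coeff j * x ^ j) := by
            refine Finset.sum_congr rfl fun x _ => ?_
            rw [Polynomial.eval_eq_sum_range' hdeg, Finset.mul_sum]
        _ = ∑ j ∈ Finset.range (2 * k), ∑ x ∈ T, (μ {x}).toReal * (p.coeff j * x ^ j) :=
            Finset.sum_comm
        _ = ∑ j ∈ Finset.range (2 * k), p.coeff j * ∑ x ∈ T, (μ {x}).toReal * x ^ j := by
            refine Finset.sum_congr rfl fun j _ => ?_
            rw [Finset.mul_sum]
            exact Finset.sum_congr rfl fun x _ => by ring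
    have h1 : (ν {y}).toReal = (ν' {y}).toReal := by
      have e1 := sum_mul_basis T (fun x => (ν {x}).toReal) hy
      have e2 := sum_mul_basis T (fun x => (ν' {x}).toReal) hy
      rw [← e1, ← e2, key ν, key ν']
      exact Finset.sum_congr rfl fun j hj => by rw [hmom j hj]
    exact (ENNReal.toReal_eq_toReal_iff' (measure_ne_top ν _) (measure_ne_top ν' _)).mp h1
  rw [meas_eq_sum_dirac ν T hT, meas_eq_sum_dirac ν' T hT']
  exact Finset.sum_congr rfl fun x hx => by rw [hsingle x hx]
end

section
/- Let ν be a probability distribution on ℝ supported on at most k points, and let ν' be any probability distribution on ℝ with finite moments up to order 2k. If m_j(ν) = m_j(ν') for all j = 1, …, 2k, then ν = ν'. -/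
/-!
Write `S` for the atoms of `ν`. The polynomial `Q = ∏_{s ∈ S} (X - s)²` has degree `2 |S| ≤ 2k`,
is nonnegative, and vanishes exactly on `S`. Its `ν`-integral is `0`, hence so is its
`ν'`-integral, which forces `ν'` to live on `S` as well. Integrating the Lagrange basis
polynomials of `S` (degree `|S| - 1`) then recovers the mass of each atom, for both measures.
-/

open MeasureTheory Polynomial Lagrange

section Moments

variable {μ μ' : Measure ℝ} {n : ℕ}

lemma Polynomial.integrable_eval_of_natDegree_le
    (hμ : ∀ j ≤ n, Integrable (fun x => x ^ j) μ) {P : ℝ[X]} (hP : P.natDegree ≤ n) :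
    Integrable (fun x => P.eval x) μ := by
  simp_rw [eval_eq_sum_range' (Nat.lt_succ_of_le hP)]
  exact integrable_finsetSum _ fun i hi =>
    (hμ i (Nat.lt_succ_iff.mp (Finset.mem_range.mp hi))).const_mul _

lemma Polynomial.integral_eval_eq_of_moments_eq
    (hμ : ∀ j ≤ n, Integrable (fun x => x ^ j) μ) (hμ' : ∀ j ≤ n, Integrable (fun x => x ^ j) μ')
    (hm : ∀ j ≤ n, ∫ x, x ^ j ∂μ = ∫ x, x ^ j ∂μ') {P : ℝ[X]} (hP : P.natDegree ≤ n) :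
    ∫ x, P.eval x ∂μ = ∫ x, P.eval x ∂μ' := by
  have hj : ∀ i ∈ Finset.range (n + 1), i ≤ n := fun i hi =>
    Nat.lt_succ_iff.mp (Finset.mem_range.mp hi)
  simp_rw [eval_eq_sum_range' (Nat.lt_succ_of_le hP)]
  rw [integral_finsetSum _ fun i hi => (hμ i (hj i hi)).const_mul _,
    integral_finsetSum _ fun i hi => (hμ' i (hj i hi)).const_mul _]
  refine Finset.sum_congr rfl fun i hi => ?_
  rw [integral_const_mul, integral_const_mul, hm i (hj i hi)]

end Moments

lemma MeasureTheory.Measure.ext_of_ae_mem_finset {α : Type*} [MeasurableSpace α]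
    [MeasurableSingletonClass α] {μ μ' : Measure α} {S : Finset α}
    (hμ : ∀ᵐ x ∂μ, x ∈ S) (hμ' : ∀ᵐ x ∂μ', x ∈ S) (h : ∀ s ∈ S, μ {s} = μ' {s}) : μ = μ' := by
  classical
  ext t -
  have hfilter : t ∩ S = ↑(S.filter (· ∈ t)) := by
    ext x
    simp [and_comm]
  have hμS : μ (↑S)ᶜ = 0 := mem_ae_iff.mp hμ
  have hμ'S : μ' (↑S)ᶜ = 0 := mem_ae_iff.mp hμ'
  rw [← measure_inter_conull hμS, ← measure_inter_conull hμ'S, hfilter,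
    ← sum_measure_singleton, ← sum_measure_singleton]
  exact Finset.sum_congr rfl fun s hs => h s (Finset.mem_filter.mp hs).1

section FiniteSupport

variable {μ : Measure ℝ} {S : Finset ℝ}

lemma integral_eval_nodal_sq_eq_zero (hμ : ∀ᵐ x ∂μ, x ∈ S) :
    ∫ x, (nodal S id ^ 2).eval x ∂μ = 0 := by
  refine integral_eq_zero_of_ae ?_
  filter_upwards [hμ] with x hx
  have hQx : (nodal S id).eval x = 0 := eval_nodal_at_node (v := id) hx
  simp [hQx]

lemma ae_mem_of_integral_eval_nodal_sq_eq_zero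
    (hint : Integrable (fun x => (nodal S id ^ 2).eval x) μ)
    (h : ∫ x, (nodal S id ^ 2).eval x ∂μ = 0) : ∀ᵐ x ∂μ, x ∈ S := by
  have hzero := (integral_eq_zero_iff_of_nonneg (fun x => by simp [sq_nonneg]) hint).mp h
  filter_upwards [hzero] with x hx
  by_contra hxS
  have hne : (nodal S id).eval x ≠ 0 :=
    eval_nodal_not_at_node fun s hs hxs => hxS (hxs ▸ hs)
  exact hne (pow_eq_zero_iff two_ne_zero |>.mp (by simpa using hx))

lemma integral_eval_basis_eq_measureReal (hμ : ∀ᵐ x ∂μ, x ∈ S) {s : ℝ} (hs : s ∈ S) :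
    ∫ x, (Lagrange.basis S id s).eval x ∂μ = μ.real {s} := by
  rw [← integral_indicator_one (measurableSet_singleton s)]
  refine integral_congr_ae ?_
  filter_upwards [hμ] with x hx
  by_cases hxs : x = s
  · subst hxs
    simpa using eval_basis_self (v := id) (Set.injOn_id _) hx
  · simpa [hxs] using eval_basis_of_ne (v := id) (Ne.symm hxs) hx

end FiniteSupport

theorem stmt_3 (k : ℕ) (ν ν' : Measure ℝ) [IsProbabilityMeasure ν] [IsProbabilityMeasure ν']
    (S : Finset ℝ) (hcard : S.card ≤ k) (hsupp : ν ↑S = 1)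
    (hint : ∀ j ≤ 2 * k, Integrable (fun x => x ^ j) ν')
    (hm : ∀ j, 1 ≤ j → j ≤ 2 * k → ∫ x, x ^ j ∂ν = ∫ x, x ^ j ∂ν') :
    ν = ν' := by
  have hνS : ∀ᵐ x ∂ν, x ∈ S :=
    (ae_mem_iff_measure_eq S.measurableSet.nullMeasurableSet).2 (by rw [hsupp, measure_univ])
  have hνint : ∀ j ≤ 2 * k, Integrable (fun x => x ^ j) ν := fun _ _ =>
    Measure.restrict_eq_self_of_ae_mem hνS ▸ IntegrableOn.finset
  have hmom : ∀ j ≤ 2 * k, ∫ x, x ^ j ∂ν = ∫ x, x ^ j ∂ν' := fun j hj => by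
    rcases Nat.eq_zero_or_pos j with rfl | hj0
    · simp
    · exact hm j hj0 hj
  have hQdeg : (nodal S id ^ 2).natDegree ≤ 2 * k := by
    rw [natDegree_pow, natDegree_nodal]
    omega
  have hQν' : ∫ x, (nodal S id ^ 2).eval x ∂ν' = 0 := by
    rw [← integral_eval_eq_of_moments_eq hνint hint hmom hQdeg, integral_eval_nodal_sq_eq_zero hνS]
  have hν'S : ∀ᵐ x ∂ν', x ∈ S :=
    ae_mem_of_integral_eval_nodal_sq_eq_zero (integrable_eval_of_natDegree_le hint hQdeg) hQν'
  refine Measure.ext_of_ae_mem_finset hνS hν'S fun s hs => ?_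
  have hLdeg : (Lagrange.basis S id s).natDegree ≤ 2 * k := by
    rw [natDegree_basis (Set.injOn_id _) hs]
    omega
  have hmass := integral_eval_eq_of_moments_eq hνint hint hmom hLdeg
  rwa [integral_eval_basis_eq_measureReal hνS hs, integral_eval_basis_eq_measureReal hν'S hs,
    measureReal_eq_measureReal_iff] at hmass
end

section
/- For all real p ≥ 0, if Z is a standard normal random variable then (p/e)^{p/2} ≤ E|Z|^p ≤ √2 · (p/e)^{p/2}. -/
open MeasureTheory ProbabilityTheory

open Real Set Filter Topology

/-!
Put `x = p / 2`. Then `E|Z|^p = 2^x Γ(x + 1/2) / √π` and `(p/e)^(p/2) = 2^x x^x e^(-x)`, so the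
claim is `log √π ≤ g x ≤ log √(2π)` for `g x = log Γ(x + 1/2) - (x log x - x)`, the `stirlingGap`.

Concavity of `log` gives `∫_x^{x+1} log ≤ log (x + 1/2)`, which is exactly `g x ≤ g (x + 1)`.
For the upper bound push `x` to infinity: log-convexity of `Γ` between consecutive integers bounds
`g` by Stirling's sequence, whose limit is `√π`. For the lower bound it suffices to treat
`0 < x ≤ 1`, where the duplication formula gives
`g x = log √π + x (1 - log 2) + (log Γ(2x+1) - log Γ(x+1) - x log (2x))`; the last bracket is
nonnegative because, `log Γ` being convex, its slope over `[x+1, 2x+1]` dominates its slope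
`log (2x)` over `[2x, 2x+1]`.
-/

lemma log_le_log_add_div_sub_one {m t : ℝ} (hm : 0 < m) (ht : 0 < t) :
    log t ≤ log m + t / m - 1 := by
  have := log_le_sub_one_of_pos (div_pos ht hm)
  rw [log_div ht.ne' hm.ne'] at this
  linarith

theorem integral_log_le_mul_log_midpoint {a b : ℝ} (ha : 0 < a) (hab : a ≤ b) :
    ∫ t in a..b, log t ≤ (b - a) * log ((a + b) / 2) := by
  have hm : 0 < (a + b) / 2 := by linarith
  set m := (a + b) / 2
  calc ∫ t in a..b, log t ≤ ∫ t in a..b, (log m - 1 + t / m) :=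
        intervalIntegral.integral_mono_on hab intervalIntegral.intervalIntegrable_log'
          (by apply Continuous.intervalIntegrable; fun_prop)
          fun t ht => by linarith [log_le_log_add_div_sub_one hm (ha.trans_le ht.1)]
    _ = (b - a) * log m := by
        rw [intervalIntegral.integral_add (by simp)
            (by apply Continuous.intervalIntegrable; fun_prop), intervalIntegral.integral_const,
          intervalIntegral.integral_div, integral_id, smul_eq_mul]
        field_simp
        ring

noncomputable def stirlingGap (x : ℝ) : ℝ := log (Gamma (x + 1 / 2)) - (x * log x - x)

lemma log_Gamma_add_one {y : ℝ} (hy : 0 < y) :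
    log (Gamma (y + 1)) = log y + log (Gamma y) := by
  rw [Gamma_add_one hy.ne', log_mul hy.ne' (Gamma_pos_of_pos hy).ne']

theorem stirlingGap_le_add_one {x : ℝ} (hx : 0 < x) : stirlingGap x ≤ stirlingGap (x + 1) := by
  have h := integral_log_le_mul_log_midpoint hx (le_add_of_nonneg_right zero_le_one)
  rw [integral_log, show (x + (x + 1)) / 2 = x + 1 / 2 by ring] at h
  unfold stirlingGap
  rw [show x + 1 + 1 / 2 = x + 1 / 2 + 1 by ring, log_Gamma_add_one (by positivity)]
  linarith

theorem stirlingGap_le_add_nat {x : ℝ} (hx : 0 < x) (n : ℕ) :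
    stirlingGap x ≤ stirlingGap (x + n) := by
  have hmono : Monotone fun n : ℕ => stirlingGap (x + n) :=
    monotone_nat_of_le_succ fun n => by
      simpa [add_assoc] using stirlingGap_le_add_one (by positivity : 0 < x + n)
  simpa using hmono n.zero_le

lemma log_Gamma_add_half {x : ℝ} (hx : 0 < x) :
    log (Gamma (x + 1 / 2)) =
      log (Gamma (2 * x + 1)) - log (Gamma (x + 1)) - 2 * x * log 2 + log √π := by
  have hdup := congrArg log (Gamma_mul_Gamma_add_half_of_pos hx)
  rw [log_mul (Gamma_pos_of_pos hx).ne' (Gamma_pos_of_pos (by positivity)).ne',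
    log_mul (by positivity) (by positivity), log_mul (Gamma_pos_of_pos (by positivity)).ne'
    (by positivity), log_rpow two_pos] at hdup
  rw [log_Gamma_add_one hx, log_Gamma_add_one (by positivity), log_mul two_ne_zero hx.ne']
  linarith

lemma mul_log_two_mul_le_log_Gamma_two_mul_add_one_sub {x : ℝ} (hx : 0 < x) (hx1 : x ≤ 1) :
    x * log (2 * x) ≤ log (Gamma (2 * x + 1)) - log (Gamma (x + 1)) := by
  have hslope := convexOn_log_Gamma.secant_mono (a := 2 * x + 1) (x := 2 * x) (y := x + 1)
    (mem_Ioi.2 (by positivity)) (mem_Ioi.2 (by positivity)) (mem_Ioi.2 (by positivity))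
    (by linarith) (by linarith) (by linarith)
  simp only [Function.comp_apply, log_Gamma_add_one (by positivity : 0 < 2 * x)] at hslope
  rw [show 2 * x - (2 * x + 1) = -1 by ring, show x + 1 - (2 * x + 1) = -x by ring,
    div_neg, div_neg, div_one, neg_le_neg_iff, div_le_iff₀ hx] at hslope
  rw [log_Gamma_add_one (by positivity : 0 < 2 * x)]
  linarith

theorem log_sqrt_pi_le_stirlingGap_of_le_one {x : ℝ} (hx : 0 < x) (hx1 : x ≤ 1) :
    log √π ≤ stirlingGap x := by
  have hslope := mul_log_two_mul_le_log_Gamma_two_mul_add_one_sub hx hx1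
  rw [log_mul two_ne_zero hx.ne'] at hslope
  have : x * log 2 ≤ x := mul_le_of_le_one_right hx.le (by linarith [log_two_lt_d9])
  rw [stirlingGap, log_Gamma_add_half hx]
  linarith

theorem log_sqrt_pi_le_stirlingGap {x : ℝ} (hx : 0 < x) : log √π ≤ stirlingGap x := by
  obtain ⟨n, hn⟩ : ∃ n : ℕ, x - n ∈ Ioc 0 1 := by
    refine ⟨⌈x⌉₊ - 1, ?_, ?_⟩ <;>
      simp only [Nat.cast_sub (Nat.one_le_ceil_iff.mpr hx), Nat.cast_one]
    · linarith [Nat.ceil_lt_add_one hx.le]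
    · linarith [Nat.le_ceil x]
  simpa using (log_sqrt_pi_le_stirlingGap_of_le_one hn.1 hn.2).trans
    (stirlingGap_le_add_nat hn.1 n)

lemma log_Gamma_add_le {m t : ℝ} (hm : 0 < m) (ht0 : 0 ≤ t) (ht1 : t ≤ 1) :
    log (Gamma (m + t)) ≤ log (Gamma (m + 1)) - (1 - t) * log m := by
  have hchord := convexOn_log_Gamma.2 (mem_Ioi.mpr hm) (mem_Ioi.mpr (by linarith : 0 < m + 1))
    (sub_nonneg.mpr ht1) ht0 (sub_add_cancel 1 t)
  rw [smul_eq_mul, smul_eq_mul, show (1 - t) * m + t * (m + 1) = m + t by ring] at hchord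
  simp only [Function.comp_apply, smul_eq_mul] at hchord
  rw [log_Gamma_add_one hm] at hchord ⊢
  linarith

theorem stirlingGap_le_log_sqrt_two_add_log_stirlingSeq {n : ℕ} (hn : n ≠ 0) {y : ℝ}
    (hny : n ≤ y + 1 / 2) (hyn : y + 1 / 2 ≤ n + 1) :
    stirlingGap y ≤ log √2 + log (Stirling.stirlingSeq n) := by
  have hn0 : (0 : ℝ) < n := by positivity
  have hy : 0 < y := by linarith [show (1 : ℝ) ≤ n by exact_mod_cast Nat.one_le_iff_ne_zero.2 hn]
  have hchord := log_Gamma_add_le hn0 (t := y + 1 / 2 - n) (by linarith) (by linarith)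
  rw [add_sub_cancel, Gamma_nat_eq_factorial] at hchord
  have hstirling := Stirling.log_stirlingSeq_formula n
  rw [log_mul two_ne_zero hn0.ne', log_div hn0.ne' (exp_pos 1).ne', log_exp] at hstirling
  have htangent := log_le_log_add_div_sub_one hy hn0
  have hscaled : y * log n ≤ y * log y + n - y := by
    have := mul_le_mul_of_nonneg_left htangent hy.le
    rwa [mul_sub, mul_add, mul_div_cancel₀ _ hy.ne', mul_one] at this
  rw [stirlingGap, log_sqrt zero_le_two]
  linarith

theorem stirlingGap_le {x : ℝ} (hx : 0 < x) : stirlingGap x ≤ log √2 + log √π := by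
  set k := ⌊x + 1 / 2⌋₊
  have hk : (k : ℝ) ≤ x + 1 / 2 := Nat.floor_le (by linarith)
  have hk' : x + 1 / 2 < k + 1 := Nat.lt_floor_add_one _
  have hbound : ∀ n : ℕ, stirlingGap x ≤ log √2 + log (Stirling.stirlingSeq (n + (k + 1))) :=
    fun n => (stirlingGap_le_add_nat hx (n + 1)).trans <|
      stirlingGap_le_log_sqrt_two_add_log_stirlingSeq (by omega) (by push_cast; linarith)
        (by push_cast; linarith)
  have hlim : Tendsto (fun n : ℕ => log √2 + log (Stirling.stirlingSeq (n + (k + 1))))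
      atTop (𝓝 (log √2 + log √π)) :=
    ((Stirling.tendsto_stirlingSeq_sqrt_pi.comp (tendsto_add_atTop_nat (k + 1))).log
      (by positivity)).const_add _
  exact ge_of_tendsto' hlim hbound

lemma Gamma_add_half_eq {x : ℝ} (hx : 0 < x) :
    Gamma (x + 1 / 2) = exp (stirlingGap x) * (x ^ x * exp (-x)) := by
  conv_lhs => rw [← exp_log (Gamma_pos_of_pos (by positivity : 0 < x + 1 / 2))]
  rw [rpow_def_of_pos hx, ← exp_add, ← exp_add, stirlingGap]
  congr 1
  ring

theorem Gamma_add_half_bounds {x : ℝ} (hx : 0 ≤ x) :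
    √π * (x ^ x * exp (-x)) ≤ Gamma (x + 1 / 2) ∧
      Gamma (x + 1 / 2) ≤ √2 * (√π * (x ^ x * exp (-x))) := by
  rcases hx.eq_or_lt with rfl | hx
  · simp only [zero_add, Gamma_one_half_eq, rpow_zero, neg_zero, exp_zero, mul_one]
    exact ⟨le_rfl, le_mul_of_one_le_left (sqrt_nonneg _) (one_le_sqrt.2 one_le_two)⟩
  have hA : 0 ≤ x ^ x * exp (-x) := by positivity
  have hlower : √π ≤ exp (stirlingGap x) := by
    rw [← exp_log (by positivity : 0 < √π)]
    exact exp_le_exp.2 (log_sqrt_pi_le_stirlingGap hx)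
  have hupper : exp (stirlingGap x) ≤ √2 * √π := by
    rw [← exp_log (by positivity : 0 < √π), ← exp_log (by positivity : 0 < √2), ← exp_add]
    exact exp_le_exp.2 (stirlingGap_le hx)
  rw [Gamma_add_half_eq hx, ← mul_assoc √2]
  exact ⟨mul_le_mul_of_nonneg_right hlower hA, mul_le_mul_of_nonneg_right hupper hA⟩

theorem integral_abs_rpow_gaussianReal {p : ℝ} (hp : -1 < p) :
    ∫ z, |z| ^ p ∂(gaussianReal 0 1) = 2 ^ (p / 2) * Gamma ((p + 1) / 2) / √π := by
  rw [integral_gaussianReal_eq_integral_smul one_ne_zero]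
  have hdensity : ∀ z : ℝ, gaussianPDFReal 0 1 z • |z| ^ p =
      (√(2 * π))⁻¹ * (|z| ^ p * exp (-(1 / 2) * |z| ^ (2 : ℝ))) := by
    intro z
    rw [gaussianPDFReal_def, rpow_two, sq_abs, smul_eq_mul]
    push_cast
    ring_nf
  simp_rw [hdensity]
  rw [integral_const_mul, integral_comp_abs (f := fun t => t ^ p * exp (-(1 / 2) * t ^ (2 : ℝ))),
    integral_rpow_mul_exp_neg_mul_rpow two_pos hp one_half_pos]
  have hhalf : ((1 : ℝ) / 2) ^ (-(p + 1) / 2) = 2 ^ (p / 2) * √2 := by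
    rw [one_div, inv_rpow zero_le_two, ← rpow_neg zero_le_two, sqrt_eq_rpow, ← rpow_add two_pos]
    ring_nf
  rw [hhalf, sqrt_mul zero_le_two]
  field_simp

theorem stmt_7 (p : ℝ) (hp : 0 ≤ p) :
    (p / Real.exp 1) ^ (p / 2) ≤ ∫ z, |z| ^ p ∂(gaussianReal 0 1) ∧
    ∫ z, |z| ^ p ∂(gaussianReal 0 1) ≤ Real.sqrt 2 * (p / Real.exp 1) ^ (p / 2) := by
  set x := p / 2
  have hmoment : ∫ z, |z| ^ p ∂(gaussianReal 0 1) = 2 ^ x * (Gamma (x + 1 / 2) / √π) := by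
    rw [integral_abs_rpow_gaussianReal (by linarith), add_div, mul_div_assoc]
  have hpow : (p / exp 1) ^ x = 2 ^ x * (x ^ x * exp (-x)) := by
    rw [show p / exp 1 = 2 * (x / exp 1) by ring, mul_rpow zero_le_two (by positivity),
      div_rpow (by positivity) (exp_pos 1).le, exp_one_rpow, exp_neg, div_eq_mul_inv]
  obtain ⟨hlower, hupper⟩ := Gamma_add_half_bounds (by positivity : 0 ≤ x)
  have hsqrt_pi : 0 < √π := by positivity
  rw [hmoment, hpow, mul_left_comm √2]
  constructor
  · gcongr
    rw [le_div_iff₀ hsqrt_pi]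
    linarith
  · gcongr
    rw [div_le_iff₀ hsqrt_pi]
    linarith
end

section
/- For any integer r ≥ 2, any real number δ > 0, and any real numbers x_1, …, x_r, the integral over t ∈ ℝ of min( δ / ∏_{i=1}^{r} |t − x_i| , 1 ) dt is at most 4 r δ^{1/r}. -/
/-!
If `x i` is a point nearest to `t`, then `∏ j, |t - x j| ≥ |t - x i| ^ r`, so the integrand is at
most `∑ i, min (δ / |t - x i| ^ r) 1`. Each summand is a translate of `min (δ / |t| ^ r) 1`, whose
integral over `(0, ∞)` is split at `a = δ ^ (1 / r)`: the piece over `(0, a]` is at most `a`, and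
comparison with `δ t ^ (-r)` bounds the piece over `(a, ∞)` by `a / (r - 1) ≤ a`.
-/

open MeasureTheory Set

lemma integrable_comp_abs_of_integrableOn_Ioi {f : ℝ → ℝ} (hf : IntegrableOn f (Ioi 0)) :
    Integrable (fun x => f |x|) := by
  have h_Ioi : IntegrableOn (fun x => f |x|) (Ioi 0) :=
    hf.congr_fun (fun x hx => by rw [abs_of_pos hx]) measurableSet_Ioi
  have h_Iic : IntegrableOn (fun x => f |x|) (Iic 0) := by
    rw [← Measure.map_neg_eq_self (volume : Measure ℝ), measurableEmbedding_neg.integrableOn_map_iff]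
    simp_rw [Function.comp_def, abs_neg, neg_preimage, neg_Iic, neg_zero]
    exact Iff.mpr integrableOn_Ici_iff_integrableOn_Ioi h_Ioi
  rw [← integrableOn_univ, ← Iic_union_Ioi (a := (0 : ℝ))]
  exact h_Iic.union h_Ioi

section Profile

variable {r : ℕ} {a : ℝ}

lemma min_div_pow_le_mul_rpow_neg {s : ℝ} (hs : 0 < s) :
    min (a ^ r / s ^ r) 1 ≤ a ^ r * s ^ (-(r : ℝ)) := by
  rw [Real.rpow_neg hs.le, Real.rpow_natCast, ← div_eq_mul_inv]
  exact min_le_left _ _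

lemma min_div_pow_nonneg (ha : 0 ≤ a) {s : ℝ} (hs : 0 ≤ s) : 0 ≤ min (a ^ r / s ^ r) 1 :=
  le_min (by positivity) zero_le_one

lemma integrableOn_Ioi_min_div_pow (hr : 1 < r) (ha : 0 < a) :
    IntegrableOn (fun s => min (a ^ r / s ^ r) 1) (Ioi 0) := by
  have hr' : -(r : ℝ) < -1 := by rw [neg_lt_neg_iff]; exact_mod_cast hr
  have hmeas : AEStronglyMeasurable (fun s : ℝ => min (a ^ r / s ^ r) 1) :=
    (by fun_prop : Measurable fun s : ℝ => min (a ^ r / s ^ r) 1).aestronglyMeasurable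
  rw [← Ioc_union_Ioi_eq_Ioi ha.le]
  refine IntegrableOn.union ?_ ?_
  · refine (integrableOn_const measure_Ioc_lt_top.ne (C := (1 : ℝ))).mono' hmeas.restrict ?_
    filter_upwards [ae_restrict_mem measurableSet_Ioc] with s hs
    rw [Real.norm_of_nonneg (min_div_pow_nonneg ha.le hs.1.le)]
    exact min_le_right _ _
  · refine ((integrableOn_Ioi_rpow_of_lt hr' ha).const_mul (a ^ r)).mono' hmeas.restrict ?_
    filter_upwards [ae_restrict_mem measurableSet_Ioi] with s hs
    rw [Real.norm_of_nonneg (min_div_pow_nonneg ha.le (ha.le.trans hs.le))]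
    exact min_div_pow_le_mul_rpow_neg (ha.trans hs)

lemma setIntegral_Ioi_min_div_pow_le (hr : 1 < r) (ha : 0 < a) :
    ∫ s in Ioi 0, min (a ^ r / s ^ r) 1 ≤ 2 * a := by
  have hr' : -(r : ℝ) < -1 := by rw [neg_lt_neg_iff]; exact_mod_cast hr
  have hint := integrableOn_Ioi_min_div_pow hr ha
  have h_tail : IntegrableOn (fun s : ℝ => a ^ r * s ^ (-(r : ℝ))) (Ioi a) :=
    (integrableOn_Ioi_rpow_of_lt hr' ha).const_mul (a ^ r)
  have h_head : ∫ s in Ioc 0 a, min (a ^ r / s ^ r) 1 ≤ a := by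
    calc ∫ s in Ioc 0 a, min (a ^ r / s ^ r) 1 ≤ ∫ _ in Ioc 0 a, (1 : ℝ) :=
          setIntegral_mono_on (hint.mono_set Ioc_subset_Ioi_self)
            (integrableOn_const measure_Ioc_lt_top.ne) measurableSet_Ioc
            fun _ _ => min_le_right _ _
      _ = a := by simp [ha.le]
  have h_tail_le : ∫ s in Ioi a, min (a ^ r / s ^ r) 1 ≤ a := by
    calc ∫ s in Ioi a, min (a ^ r / s ^ r) 1 ≤ ∫ s in Ioi a, a ^ r * s ^ (-(r : ℝ)) :=
          setIntegral_mono_on (hint.mono_set (Ioi_subset_Ioi ha.le)) h_tail measurableSet_Ioi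
            fun s hs => min_div_pow_le_mul_rpow_neg (ha.trans hs)
      _ = a ^ (r : ℝ) * a ^ (-(r : ℝ) + 1) / (r - 1) := by
          rw [integral_const_mul, integral_Ioi_rpow_of_lt hr' ha, Real.rpow_natCast, neg_div,
            ← div_neg, neg_add', neg_neg, mul_div_assoc]
      _ = a / (r - 1) := by rw [← Real.rpow_add ha]; norm_num
      _ ≤ a := div_le_self ha.le (by
            have : (2 : ℝ) ≤ r := by exact_mod_cast hr
            linarith)
  rw [← Ioc_union_Ioi_eq_Ioi ha.le, setIntegral_union (Ioc_disjoint_Ioi le_rfl) measurableSet_Ioi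
    (hint.mono_set Ioc_subset_Ioi_self) (hint.mono_set (Ioi_subset_Ioi ha.le))]
  linarith

end Profile

section Line

variable {r : ℕ} {δ : ℝ}

lemma exists_pow_eq_of_pos (hr : r ≠ 0) (hδ : 0 < δ) :
    ∃ a, 0 < a ∧ a ^ r = δ ∧ δ ^ (r : ℝ)⁻¹ = a :=
  ⟨δ ^ (r : ℝ)⁻¹, by positivity, Real.rpow_inv_natCast_pow hδ.le hr, rfl⟩

lemma integrable_min_div_abs_pow (hr : 1 < r) (hδ : 0 < δ) :
    Integrable fun t : ℝ => min (δ / |t| ^ r) 1 := by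
  obtain ⟨a, ha, rfl, -⟩ := exists_pow_eq_of_pos (r := r) (by omega) hδ
  exact integrable_comp_abs_of_integrableOn_Ioi (integrableOn_Ioi_min_div_pow hr ha)

lemma integral_min_div_abs_pow_le (hr : 1 < r) (hδ : 0 < δ) :
    ∫ t : ℝ, min (δ / |t| ^ r) 1 ≤ 4 * δ ^ (r : ℝ)⁻¹ := by
  obtain ⟨a, ha, rfl, hroot⟩ := exists_pow_eq_of_pos (r := r) (by omega) hδ
  rw [hroot, integral_comp_abs (f := fun s => min (a ^ r / s ^ r) 1)]
  linarith [setIntegral_Ioi_min_div_pow_le hr ha]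

end Line

lemma min_div_prod_abs_sub_le_sum {ι : Type*} [Fintype ι] [Nonempty ι] {δ : ℝ} (hδ : 0 ≤ δ)
    (x : ι → ℝ) (t : ℝ) :
    min (δ / ∏ i, |t - x i|) 1 ≤ ∑ i, min (δ / |t - x i| ^ Fintype.card ι) 1 := by
  obtain ⟨i, hi⟩ := Finite.exists_min fun i => |t - x i|
  have hle : min (δ / ∏ j, |t - x j|) 1 ≤ min (δ / |t - x i| ^ Fintype.card ι) 1 := by
    rcases (abs_nonneg (t - x i)).eq_or_lt with h0 | hpos
    · rw [← h0, Finset.prod_eq_zero (Finset.mem_univ i) h0.symm]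
      simp
    · refine min_le_min_right _ (div_le_div_of_nonneg_left hδ (by positivity) ?_)
      calc |t - x i| ^ Fintype.card ι = ∏ _j, |t - x i| := by simp
        _ ≤ ∏ j, |t - x j| := Finset.prod_le_prod (fun _ _ => abs_nonneg _) fun j _ => hi j
  exact hle.trans (Finset.single_le_sum (f := fun j => min (δ / |t - x j| ^ Fintype.card ι) 1)
    (fun j _ => le_min (by positivity) zero_le_one) (Finset.mem_univ i))

theorem stmt_8 (r : ℕ) (hr : 2 ≤ r) (δ : ℝ) (hδ : 0 < δ) (x : Fin r → ℝ) :
    ∫ t : ℝ, min (δ / ∏ i, |t - x i|) 1 ≤ 4 * r * δ ^ ((r : ℝ)⁻¹) := by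
  have : Nonempty (Fin r) := ⟨⟨0, by omega⟩⟩
  have hint := integrable_min_div_abs_pow (δ := δ) hr hδ
  calc ∫ t : ℝ, min (δ / ∏ i, |t - x i|) 1
      ≤ ∫ t : ℝ, ∑ i, min (δ / |t - x i| ^ r) 1 := by
        refine integral_mono_of_nonneg (.of_forall fun t => le_min (by positivity) zero_le_one)
          (integrable_finsetSum _ fun i _ => hint.comp_sub_right (x i)) (.of_forall fun t => ?_)
        simpa using min_div_prod_abs_sub_le_sum hδ.le x t
    _ = ∑ i : Fin r, ∫ t : ℝ, min (δ / |t| ^ r) 1 := by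
        rw [integral_finsetSum _ fun i _ => hint.comp_sub_right (x i)]
        exact Finset.sum_congr rfl fun i _ =>
          integral_sub_right_eq_self (fun t => min (δ / |t| ^ r) 1) (x i)
    _ ≤ 4 * r * δ ^ ((r : ℝ)⁻¹) := by
        rw [Finset.sum_const, Finset.card_fin, nsmul_eq_mul, mul_comm 4, mul_assoc]
        gcongr
        exact integral_min_div_abs_pow_le hr hδ
end

section
/- Given any 2k distinct real numbers x_1 < x_2 < … < x_{2k}, there exist probability distributions ν supported on {x_1, x_3, …, x_{2k−1}} and ν' supported on {x_2, x_4, …, x_{2k}} such that m_j(ν) = m_j(ν') for all j = 1, …, 2k−2. -/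
open MeasureTheory

open Finset Polynomial


noncomputable def myc {n : ℕ} (x : Fin n → ℝ) (i : Fin n) : ℝ :=
  ∏ l ∈ Finset.univ.erase i, (x i - x l)⁻¹

lemma myc_eq_coeff {n : ℕ} (x : Fin n → ℝ) (hx : Function.Injective x) (i : Fin n) :
    (Lagrange.basis Finset.univ x i).coeff (n - 1) = myc x i := by
  have hvs : Set.InjOn x (Finset.univ : Finset (Fin n)) := hx.injOn
  have hdeg : (Lagrange.basis Finset.univ x i).natDegree = n - 1 := by
    rw [Lagrange.natDegree_basis hvs (mem_univ i), card_univ, Fintype.card_fin]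
  rw [← hdeg, coeff_natDegree, Lagrange.basis, leadingCoeff_prod]
  refine Finset.prod_congr rfl fun l hl => ?_
  have hne : x i ≠ x l := fun h => (mem_erase.mp hl).1.symm (hx h)
  rw [Lagrange.basisDivisor, leadingCoeff_mul, leadingCoeff_C,
    (monic_X_sub_C _).leadingCoeff, mul_one]

lemma sum_pow_myc {n : ℕ} (x : Fin n → ℝ) (hx : Function.Injective x)
    {j : ℕ} (hj : j + 2 ≤ n) : ∑ i, x i ^ j * myc x i = 0 := by
  have hvs : Set.InjOn x (Finset.univ : Finset (Fin n)) := hx.injOn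
  have hdf : ((X : ℝ[X]) ^ j).degree < (#(Finset.univ : Finset (Fin n)) : ℕ) := by
    rw [degree_X_pow, card_univ, Fintype.card_fin]
    exact_mod_cast by omega
  have h := Lagrange.eq_interpolate (f := (X : ℝ[X]) ^ j) hvs hdf
  have h2 := congrArg (fun p => Polynomial.coeff p (n - 1)) h
  simp only [Lagrange.interpolate_apply, finset_sum_coeff, coeff_C_mul, coeff_X_pow] at h2
  rw [if_neg (by omega)] at h2
  rw [← h2.symm]
  refine Finset.sum_congr rfl fun i _ => ?_
  rw [myc_eq_coeff x hx i, eval_pow, eval_X]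

lemma myc_sign {n : ℕ} (x : Fin n → ℝ) (hx : StrictMono x) (i : Fin n) :
    0 < (-1 : ℝ) ^ (n - 1 - (i : ℕ)) * myc x i := by
  classical
  have hsplit : Finset.univ.erase i =
      (Finset.Iio i) ∪ (Finset.Ioi i) := by
    ext l
    simp only [mem_erase, mem_union, Finset.mem_Iio, Finset.mem_Ioi, mem_univ, and_true]
    exact lt_or_lt_iff_ne.symm
  have hdisj : Disjoint (Finset.Iio i) (Finset.Ioi i) := by
    simp [Finset.disjoint_left]
    intro a ha; exact le_of_lt ha
  have hA : (0:ℝ) < ∏ l ∈ Finset.Iio i, (x i - x l)⁻¹ := by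
    refine Finset.prod_pos fun l hl => ?_
    exact inv_pos.mpr (sub_pos.mpr (hx (Finset.mem_Iio.mp hl)))
  have hB : (0:ℝ) < ∏ l ∈ Finset.Ioi i, (x l - x i)⁻¹ := by
    refine Finset.prod_pos fun l hl => ?_
    exact inv_pos.mpr (sub_pos.mpr (hx (Finset.mem_Ioi.mp hl)))
  have hBneg : ∏ l ∈ Finset.Ioi i, (x i - x l)⁻¹ =
      (-1 : ℝ) ^ (n - 1 - (i : ℕ)) * ∏ l ∈ Finset.Ioi i, (x l - x i)⁻¹ := by
    rw [← Fin.card_Ioi i, ← Finset.prod_const, ← Finset.prod_mul_distrib]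
    refine Finset.prod_congr rfl fun l _ => ?_
    rw [neg_one_mul, ← inv_neg, neg_sub]
  have : myc x i = (-1 : ℝ) ^ (n - 1 - (i : ℕ)) *
      ((∏ l ∈ Finset.Iio i, (x i - x l)⁻¹) * ∏ l ∈ Finset.Ioi i, (x l - x i)⁻¹) := by
    rw [myc, hsplit, Finset.prod_union hdisj, hBneg]; ring
  rw [this, ← mul_assoc, ← pow_add, ← two_mul, pow_mul, neg_one_sq, one_pow, one_mul]
  positivity

lemma measure_helper {n : ℕ} (x : Fin n → ℝ) (s : Finset (Fin n)) (w : Fin n → ℝ)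
    (hw : ∀ i ∈ s, 0 ≤ w i) (hsum : ∑ i ∈ s, w i = 1) :
    IsProbabilityMeasure (∑ i ∈ s, ENNReal.ofReal (w i) • Measure.dirac (x i)) ∧
    (∀ (T : Set ℝ), (∀ i ∈ s, x i ∈ T) →
      (∑ i ∈ s, ENNReal.ofReal (w i) • Measure.dirac (x i)) T = 1) ∧
    ∀ j : ℕ, ∫ t, t ^ j ∂(∑ i ∈ s, ENNReal.ofReal (w i) • Measure.dirac (x i)) =
      ∑ i ∈ s, w i * x i ^ j := by
  have hT : ∀ (T : Set ℝ), (∀ i ∈ s, x i ∈ T) →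
      (∑ i ∈ s, ENNReal.ofReal (w i) • Measure.dirac (x i)) T = 1 := by
    intro T hTmem
    rw [Measure.finset_sum_apply]
    have h1 : ∀ i ∈ s, (ENNReal.ofReal (w i) • Measure.dirac (x i)) T =
        ENNReal.ofReal (w i) := by
      intro i hi
      rw [Measure.smul_apply, Measure.dirac_apply_of_mem (hTmem i hi), smul_eq_mul, mul_one]
    rw [Finset.sum_congr rfl h1, ← ENNReal.ofReal_sum_of_nonneg hw, hsum, ENNReal.ofReal_one]
  refine ⟨⟨by rw [hT Set.univ (fun i _ => Set.mem_univ _)]⟩, hT, fun j => ?_⟩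
  have hint : ∀ i ∈ s,
      Integrable (fun t : ℝ => t ^ j) (ENNReal.ofReal (w i) • Measure.dirac (x i)) := by
    intro i hi
    refine Integrable.smul_measure ?_ ENNReal.ofReal_ne_top
    refine ⟨(continuous_pow j).aestronglyMeasurable, ?_⟩
    simp only [HasFiniteIntegral, lintegral_dirac]
    exact ENNReal.coe_lt_top
  rw [integral_finset_sum_measure hint]
  refine Finset.sum_congr rfl fun i hi => ?_
  rw [integral_smul_measure, integral_dirac, ENNReal.toReal_ofReal (hw i hi), smul_eq_mul]

theorem stmt_9 (k : ℕ) (hk : 1 ≤ k) (x : Fin (2 * k) → ℝ) (hx : StrictMono x) :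
    ∃ ν ν' : Measure ℝ, IsProbabilityMeasure ν ∧ IsProbabilityMeasure ν' ∧
      ν {y | ∃ i : Fin (2 * k), Even (i : ℕ) ∧ y = x i} = 1 ∧
      ν' {y | ∃ i : Fin (2 * k), ¬ Even (i : ℕ) ∧ y = x i} = 1 ∧
      ∀ j, 1 ≤ j → j ≤ 2 * k - 2 → ∫ t, t ^ j ∂ν = ∫ t, t ^ j ∂ν' := by
  classical
  have hxinj := hx.injective
  set c : Fin (2 * k) → ℝ := myc x with hc
  set ev : Finset (Fin (2 * k)) := Finset.univ.filter (fun i => Even (i : ℕ)) with hev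
  set od : Finset (Fin (2 * k)) := Finset.univ.filter (fun i => ¬ Even (i : ℕ)) with hod
  have hceven : ∀ i ∈ ev, c i < 0 := by
    intro i hi
    have hEv : (i : ℕ) % 2 = 0 := Nat.even_iff.mp (Finset.mem_filter.mp hi).2
    have hi2k : (i : ℕ) < 2 * k := i.isLt
    have hodd : Odd (2 * k - 1 - (i : ℕ)) := Nat.odd_iff.mpr (by omega)
    have hs := myc_sign x hx i
    rw [hodd.neg_one_pow, ← hc] at hs
    linarith
  have hcodd : ∀ i ∈ od, 0 < c i := by
    intro i hi
    have hEv : (i : ℕ) % 2 = 1 :=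
      Nat.odd_iff.mp (Nat.not_even_iff_odd.mp (Finset.mem_filter.mp hi).2)
    have hi2k : (i : ℕ) < 2 * k := i.isLt
    have heven : Even (2 * k - 1 - (i : ℕ)) := Nat.even_iff.mpr (by omega)
    have hs := myc_sign x hx i
    rw [heven.neg_one_pow, one_mul, ← hc] at hs
    exact hs
  have hzero : ∀ j : ℕ, j + 2 ≤ 2 * k → ∑ i, x i ^ j * c i = 0 := fun j hj =>
    sum_pow_myc x hxinj hj
  have hsplitsum : ∀ f : Fin (2 * k) → ℝ, ∑ i ∈ ev, f i + ∑ i ∈ od, f i = ∑ i, f i := by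
    intro f
    rw [hev, hod]
    exact Finset.sum_filter_add_sum_filter_not _ _ _
  set S : ℝ := ∑ i ∈ ev, -c i with hSdef
  have hevne : ev.Nonempty := by
    refine ⟨⟨0, by omega⟩, Finset.mem_filter.mpr ⟨Finset.mem_univ _, ?_⟩⟩
    simp
  have hSpos : 0 < S := by
    refine Finset.sum_pos (fun i hi => by linarith [hceven i hi]) hevne
  have hSne : S ≠ 0 := ne_of_gt hSpos
  have hodS : ∑ i ∈ od, c i = S := by
    have h0 := hzero 0 (by omega)
    simp only [pow_zero, one_mul] at h0
    have hsp := hsplitsum c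
    rw [h0] at hsp
    rw [hSdef, Finset.sum_neg_distrib]
    linarith
  obtain ⟨hp1, hT1, hm1⟩ := measure_helper x ev (fun i => -c i / S)
    (fun i hi => div_nonneg (by linarith [hceven i hi]) hSpos.le)
    (by rw [← Finset.sum_div, ← hSdef, div_self hSne])
  obtain ⟨hp2, hT2, hm2⟩ := measure_helper x od (fun i => c i / S)
    (fun i hi => div_nonneg (hcodd i hi).le hSpos.le)
    (by rw [← Finset.sum_div, hodS, div_self hSne])
  refine ⟨_, _, hp1, hp2, hT1 _ ?_, hT2 _ ?_, ?_⟩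
  · exact fun i hi => ⟨i, (Finset.mem_filter.mp hi).2, rfl⟩
  · exact fun i hi => ⟨i, (Finset.mem_filter.mp hi).2, rfl⟩
  · intro j hj1 hj2
    rw [hm1 j, hm2 j]
    have h := hzero j (by omega)
    have hsp := hsplitsum (fun i => x i ^ j * c i)
    rw [h] at hsp
    have e1 : ∑ i ∈ ev, -c i / S * x i ^ j = (∑ i ∈ ev, -(x i ^ j * c i)) / S := by
      rw [Finset.sum_div]
      exact Finset.sum_congr rfl fun i _ => by ring
    have e2 : ∑ i ∈ od, c i / S * x i ^ j = (∑ i ∈ od, x i ^ j * c i) / S := by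
      rw [Finset.sum_div]
      exact Finset.sum_congr rfl fun i _ => by ring
    rw [e1, e2, Finset.sum_neg_distrib]
    congr 1
    linarith
end

section
/- Let X be uniformly distributed on the unit sphere S^{d−1} in ℝ^d. Then for any unit vector a and any r > 0, the probability that |⟨a, X⟩| < r is strictly less than r√d. -/
/-!
Let `ν` be Lebesgue measure on the unit ball and measure the set of pairs `(x, g)` with
`|⟪g, x⟫| < r‖g‖` under `μ ⊗ ν`. For fixed `g ≠ 0`, rotation invariance of `μ` makes the fibre
have measure `P = μ {x | |⟪a, x⟫| < r}`; for fixed unit `x`, rotation invariance of `ν` makes it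
have measure `ν {g | |g₀| < r‖g‖} ≤ vol ({|g₀| < r} ∩ B) ≤ 2r·V_{d-1}`. Thus `P·V_d ≤ 2r·V_{d-1}`,
and `2V_{d-1} < √d·V_d` for `d ≥ 2` follows from the log-convexity bound `Γ(s + 1/2) ≤ √s·Γ(s)`.
For `d = 1` the sphere is `{±a}`, which the slab misses when `r ≤ 1`.
-/

open MeasureTheory Metric Real
open scoped RealInnerProductSpace

theorem Real.Gamma_add_half_le_sqrt_mul_Gamma {s : ℝ} (hs : 0 < s) :
    Gamma (s + 1 / 2) ≤ √s * Gamma s := by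
  have hΓ : 0 < Gamma s := Gamma_pos_of_pos hs
  have h := Gamma_mul_add_mul_le_rpow_Gamma_mul_rpow_Gamma hs (by positivity : 0 < s + 1)
    (by norm_num : (0 : ℝ) < 1 / 2) (by norm_num : (0 : ℝ) < 1 / 2) (by norm_num)
  rwa [show 1 / 2 * s + 1 / 2 * (s + 1) = s + 1 / 2 by ring, Gamma_add_one hs.ne',
    ← sqrt_eq_rpow, ← sqrt_eq_rpow, sqrt_mul hs.le, mul_left_comm, mul_self_sqrt hΓ.le] at h

section InnerProductSpace

variable {E : Type*} [NormedAddCommGroup E] [InnerProductSpace ℝ E]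

theorem exists_linearIsometryEquiv_apply_eq {u v : E} (h : ‖u‖ = ‖v‖) :
    ∃ T : E ≃ₗᵢ[ℝ] E, T u = v :=
  ⟨Submodule.reflection (ℝ ∙ (u - v))ᗮ, Submodule.reflection_sub h⟩

theorem abs_real_inner_eq_norm_mul_norm_of_finrank_eq_one (hE : Module.finrank ℝ E = 1)
    (a x : E) : |⟪a, x⟫| = ‖a‖ * ‖x‖ := by
  rcases eq_or_ne a 0 with rfl | ha
  · simp
  obtain ⟨c, rfl⟩ := exists_smul_eq_of_finrank_eq_one hE ha x
  rw [real_inner_smul_right, real_inner_self_eq_norm_mul_norm, norm_smul, Real.norm_eq_abs,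
    abs_mul, abs_mul_self]
  ring

variable [MeasurableSpace E]

theorem measure_abs_inner_lt_lt_ofReal_of_finrank_eq_one (hE : Module.finrank ℝ E = 1)
    {μ : Measure E} [IsProbabilityMeasure μ] (hμ : ∀ᵐ x ∂μ, ‖x‖ = 1) {a : E} (ha : ‖a‖ = 1)
    {r : ℝ} (hr : 0 < r) : μ {x | |⟪a, x⟫| < r} < ENNReal.ofReal r := by
  rcases le_or_gt r 1 with hr1 | hr1
  · have hslab : μ {x | |⟪a, x⟫| < r} = 0 := by
      refine measure_mono_null ?_ (ae_iff.mp hμ)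
      intro x hx hx1
      rw [Set.mem_ofPred_eq, abs_real_inner_eq_norm_mul_norm_of_finrank_eq_one hE, ha, hx1] at hx
      linarith
    rw [hslab]
    exact ENNReal.ofReal_pos.mpr hr
  · exact prob_le_one.trans_lt (ENNReal.one_lt_ofReal.mpr hr1)

variable [BorelSpace E]

theorem measure_inner_norm_preimage_eq_of_norm_eq {μ : Measure E}
    (hμ : ∀ T : E ≃ₗᵢ[ℝ] E, μ.map T = μ) {a b : E} (hab : ‖a‖ = ‖b‖) {s : Set (ℝ × ℝ)}
    (hs : MeasurableSet s) :
    μ ((fun x ↦ (⟪a, x⟫, ‖x‖)) ⁻¹' s) = μ ((fun x ↦ (⟪b, x⟫, ‖x‖)) ⁻¹' s) := by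
  obtain ⟨T, rfl⟩ := exists_linearIsometryEquiv_apply_eq hab
  conv_rhs => rw [← hμ T, Measure.map_apply T.continuous.measurable (hs.preimage (by fun_prop))]
  simp only [← Set.preimage_comp, Function.comp_def, LinearIsometryEquiv.inner_map_map,
    LinearIsometryEquiv.norm_map]

variable [FiniteDimensional ℝ E]

theorem LinearIsometryEquiv.map_volume_restrict_closedBall (T : E ≃ₗᵢ[ℝ] E) (R : ℝ) :
    (volume.restrict (closedBall (0 : E) R)).map T = volume.restrict (closedBall 0 R) := by
  have h := (T.measurePreserving.restrict_preimage
    (measurableSet_closedBall (x := 0) (ε := R))).map_eq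
  rwa [T.preimage_closedBall, map_zero] at h

theorem measure_abs_inner_lt_mul_measure_univ {μ ν : Measure E} [IsProbabilityMeasure μ]
    [SFinite ν] (hμ : ∀ᵐ x ∂μ, ‖x‖ = 1) (hμinv : ∀ T : E ≃ₗᵢ[ℝ] E, μ.map T = μ)
    (hνinv : ∀ T : E ≃ₗᵢ[ℝ] E, ν.map T = ν) (hν0 : ν {0} = 0) {a u : E} (ha : ‖a‖ = 1)
    (hu : ‖u‖ = 1) (r : ℝ) :
    μ {x | |⟪a, x⟫| < r} * ν Set.univ = ν {g | |⟪u, g⟫| < r * ‖g‖} := by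
  set A := {p : E × E | |⟪p.2, p.1⟫| < r * ‖p.2‖}
  have hA : MeasurableSet A := measurableSet_lt (by fun_prop) (by fun_prop)
  have hslab (g : E) (hg : g ≠ 0) : μ ((·, g) ⁻¹' A) = μ {x | |⟪a, x⟫| < r} := by
    have hng : 0 < ‖g‖ := norm_pos_iff.mpr hg
    have hscale : {x | |⟪‖g‖ • a, x⟫| < r * ‖g‖} = {x | |⟪a, x⟫| < r} := by
      ext x
      simp only [Set.mem_ofPred_eq, real_inner_smul_left, abs_mul, abs_norm, mul_comm ‖g‖,
        mul_lt_mul_iff_left₀ hng]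
    rw [← hscale]
    exact measure_inner_norm_preimage_eq_of_norm_eq hμinv (by simp [norm_smul, ha])
      (s := {p | |p.1| < r * ‖g‖}) (measurableSet_lt (by fun_prop) (by fun_prop))
  have hcone (x : E) (hx : ‖x‖ = 1) : ν (Prod.mk x ⁻¹' A) = ν {g | |⟪u, g⟫| < r * ‖g‖} := by
    simp only [A, Set.preimage_ofPred_eq, real_inner_comm x]
    exact measure_inner_norm_preimage_eq_of_norm_eq hνinv (hx.trans hu.symm)
      (s := {p | |p.1| < r * p.2}) (measurableSet_lt (by fun_prop) (by fun_prop))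
  have hν_ne_zero : ∀ᵐ g ∂ν, g ≠ 0 := compl_mem_ae_iff.mpr hν0
  calc μ {x | |⟪a, x⟫| < r} * ν Set.univ = ∫⁻ g, μ ((·, g) ⁻¹' A) ∂ν := by
        rw [lintegral_congr_ae (hν_ne_zero.mono hslab), lintegral_const]
    _ = μ.prod ν A := (Measure.prod_apply_symm hA).symm
    _ = ∫⁻ x, ν (Prod.mk x ⁻¹' A) ∂μ := Measure.prod_apply hA
    _ = ν {g | |⟪u, g⟫| < r * ‖g‖} := by
        rw [lintegral_congr_ae (hμ.mono hcone), lintegral_const, measure_univ, mul_one]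

end InnerProductSpace

namespace EuclideanSpace

theorem volume_abs_apply_zero_lt_inter_closedBall_le (m : ℕ) (r : ℝ) :
    volume ({g : EuclideanSpace ℝ (Fin (m + 1)) | |g 0| < r} ∩ closedBall 0 1) ≤
      ENNReal.ofReal (2 * r) * volume (closedBall (0 : EuclideanSpace ℝ (Fin m)) 1) := by
  have hf : MeasurePreserving (fun g : EuclideanSpace ℝ (Fin (m + 1)) ↦
      (g 0, WithLp.toLp 2 fun j : Fin m ↦ g j.succ)) :=
    ((MeasurePreserving.id volume).prod (PiLp.volume_preserving_toLp (Fin m))).comp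
      ((volume_preserving_piFinSuccAbove (fun _ ↦ ℝ) 0).comp (PiLp.volume_preserving_ofLp _))
  have hsub : {g : EuclideanSpace ℝ (Fin (m + 1)) | |g 0| < r} ∩ closedBall 0 1 ⊆
      (fun g ↦ (g 0, WithLp.toLp 2 fun j : Fin m ↦ g j.succ)) ⁻¹'
        (Set.Ioo (-r) r ×ˢ closedBall 0 1) := by
    rintro g ⟨hg0, hg⟩
    refine ⟨abs_lt.mp hg0, ?_⟩
    rw [mem_closedBall_zero_iff] at hg ⊢
    refine le_trans ?_ hg
    rw [← sq_le_sq₀ (norm_nonneg _) (norm_nonneg _), EuclideanSpace.norm_sq_eq,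
      EuclideanSpace.norm_sq_eq, Fin.sum_univ_succ]
    exact le_add_of_nonneg_left (sq_nonneg _)
  calc _ ≤ _ := measure_mono hsub
    _ = _ := hf.measure_preimage
          (measurableSet_Ioo.prod measurableSet_closedBall).nullMeasurableSet
    _ = _ := by
        rw [Measure.volume_eq_prod, Measure.prod_prod, Real.volume_Ioo, sub_neg_eq_add, two_mul]

theorem two_mul_volume_closedBall_lt {m : ℕ} (hm : 1 ≤ m) :
    2 * volume (closedBall (0 : EuclideanSpace ℝ (Fin m)) 1) <
      ENNReal.ofReal √(m + 1) * volume (closedBall (0 : EuclideanSpace ℝ (Fin (m + 1))) 1) := by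
  have : Nonempty (Fin m) := ⟨⟨0, hm⟩⟩
  simp only [EuclideanSpace.volume_closedBall, Fintype.card_fin, ENNReal.ofReal_one, one_pow,
    one_mul]
  set g₁ := Gamma (m / 2 + 1)
  set g₂ := Gamma (((m + 1 : ℕ) : ℝ) / 2 + 1)
  have hg₁ : 0 < g₁ := Gamma_pos_of_pos (by positivity)
  have hg₂ : 0 < g₂ := Gamma_pos_of_pos (by positivity)
  have hΓ : g₂ ≤ √(m / 2 + 1) * g₁ := by
    convert Gamma_add_half_le_sqrt_mul_Gamma (s := m / 2 + 1) (by positivity) using 2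
    push_cast; ring
  have hsqrt : 2 * √(m / 2 + 1) < √(m + 1) * √π := by
    rw [← sqrt_mul (by positivity), show (2 : ℝ) = √4 by norm_num, ← sqrt_mul (by norm_num)]
    have : (1 : ℝ) ≤ m := by exact_mod_cast hm
    refine sqrt_lt_sqrt (by positivity) ?_
    nlinarith [pi_gt_three]
  have hreal : 2 * (√π ^ m / g₁) < √(m + 1) * (√π ^ (m + 1) / g₂) :=
    calc 2 * (√π ^ m / g₁) = 2 * √(m / 2 + 1) * √π ^ m / (√(m / 2 + 1) * g₁) := by
          field_simp
      _ < √(m + 1) * √π * √π ^ m / (√(m / 2 + 1) * g₁) := by gcongr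
      _ ≤ √(m + 1) * √π * √π ^ m / g₂ := by gcongr
      _ = √(m + 1) * (√π ^ (m + 1) / g₂) := by ring
  rw [← ENNReal.ofReal_ofNat 2, ← ENNReal.ofReal_mul (by norm_num),
    ← ENNReal.ofReal_mul (by positivity)]
  exact (ENNReal.ofReal_lt_ofReal_iff (by positivity)).mpr hreal

theorem measure_abs_inner_lt_lt_ofReal_mul_sqrt {m : ℕ} (hm : 1 ≤ m)
    {μ : Measure (EuclideanSpace ℝ (Fin (m + 1)))} [IsProbabilityMeasure μ]
    (hμ : ∀ᵐ x ∂μ, ‖x‖ = 1)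
    (hμinv : ∀ T : EuclideanSpace ℝ (Fin (m + 1)) ≃ₗᵢ[ℝ] EuclideanSpace ℝ (Fin (m + 1)),
      μ.map T = μ)
    {a : EuclideanSpace ℝ (Fin (m + 1))} (ha : ‖a‖ = 1) {r : ℝ} (hr : 0 < r) :
    μ {x | |⟪a, x⟫| < r} < ENNReal.ofReal (r * √(m + 1)) := by
  set ν := volume.restrict (closedBall (0 : EuclideanSpace ℝ (Fin (m + 1))) 1)
  set u : EuclideanSpace ℝ (Fin (m + 1)) := EuclideanSpace.single 0 1
  have hν : ν Set.univ = volume (closedBall (0 : EuclideanSpace ℝ (Fin (m + 1))) 1) :=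
    Measure.restrict_apply_univ _
  have hν_ne_zero : ν Set.univ ≠ 0 := by
    rw [hν]; exact (measure_closedBall_pos _ _ one_pos).ne'
  have hν_ne_top : ν Set.univ ≠ ⊤ := by
    rw [hν]; exact measure_closedBall_lt_top.ne
  have hcone : ν {g | |⟪u, g⟫| < r * ‖g‖} ≤
      volume ({g : EuclideanSpace ℝ (Fin (m + 1)) | |g 0| < r} ∩ closedBall 0 1) := by
    rw [Measure.restrict_apply (measurableSet_lt (by fun_prop) (by fun_prop))]
    refine measure_mono fun g ⟨hg, hball⟩ ↦ ⟨?_, hball⟩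
    rw [mem_closedBall_zero_iff] at hball
    simp only [Set.mem_ofPred_eq, u, EuclideanSpace.inner_single_left, map_one, one_mul] at hg ⊢
    exact hg.trans_le (mul_le_of_le_one_right hr.le hball)
  rw [← ENNReal.mul_lt_mul_iff_left hν_ne_zero hν_ne_top]
  calc μ {x | |⟪a, x⟫| < r} * ν Set.univ = ν {g | |⟪u, g⟫| < r * ‖g‖} :=
        measure_abs_inner_lt_mul_measure_univ hμ hμinv
          (·.map_volume_restrict_closedBall 1) (measure_singleton 0) ha (by simp [u]) r
    _ ≤ volume ({g : EuclideanSpace ℝ (Fin (m + 1)) | |g 0| < r} ∩ closedBall 0 1) := hcone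
    _ ≤ ENNReal.ofReal (2 * r) * volume (closedBall (0 : EuclideanSpace ℝ (Fin m)) 1) :=
        volume_abs_apply_zero_lt_inter_closedBall_le m r
    _ = ENNReal.ofReal r * (2 * volume (closedBall (0 : EuclideanSpace ℝ (Fin m)) 1)) := by
        rw [ENNReal.ofReal_mul zero_le_two, ENNReal.ofReal_ofNat, mul_comm 2, mul_assoc]
    _ < ENNReal.ofReal r *
          (ENNReal.ofReal √(m + 1) * volume (closedBall (0 : EuclideanSpace ℝ (Fin (m + 1))) 1)) :=
        ENNReal.mul_lt_mul_right (ENNReal.ofReal_pos.mpr hr).ne' ENNReal.ofReal_ne_top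
          (two_mul_volume_closedBall_lt hm)
    _ = ENNReal.ofReal (r * √(m + 1)) * ν Set.univ := by
        rw [hν, ENNReal.ofReal_mul hr.le, mul_assoc]

end EuclideanSpace

theorem stmt_10 (d : ℕ) (hd : 1 ≤ d)
    (μ : Measure (EuclideanSpace ℝ (Fin d))) [IsProbabilityMeasure μ]
    (hsphere : μ (Metric.sphere (0 : EuclideanSpace ℝ (Fin d)) 1)ᶜ = 0)
    (hinv : ∀ T : EuclideanSpace ℝ (Fin d) ≃ₗᵢ[ℝ] EuclideanSpace ℝ (Fin d),
      μ.map T = μ)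
    (a : EuclideanSpace ℝ (Fin d)) (ha : ‖a‖ = 1) (r : ℝ) (hr : 0 < r) :
    (μ {x | |(inner ℝ a x : ℝ)| < r}).toReal < r * Real.sqrt d := by
  have hμ : ∀ᵐ x ∂μ, ‖x‖ = 1 := by
    filter_upwards [mem_ae_iff.mpr hsphere] with x hx using mem_sphere_zero_iff_norm.mp hx
  refine ENNReal.toReal_lt_of_lt_ofReal ?_
  obtain rfl | hd := hd.eq_or_lt
  · simpa using measure_abs_inner_lt_lt_ofReal_of_finrank_eq_one (by simp) hμ ha hr
  · obtain ⟨m, rfl⟩ := Nat.exists_eq_add_of_le' hd.le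
    simpa using EuclideanSpace.measure_abs_inner_lt_lt_ofReal_mul_sqrt (by omega) hμ hinv ha hr
end

section
/- Let p be a polynomial of degree at most L with complex coefficients such that |p(x)| ≤ 1 for all real x ∈ [−1, 1]. Then |p(z)| ≤ (1 + √2)^L for every complex number z with |z| = 1. -/
/-!
Under the Joukowski map `y ↦ (y + y⁻¹) / 2` the unit circle goes onto `[-1, 1]`, so the polynomial
`q(y) = y ^ L * p ((y + y⁻¹) / 2)` is bounded by `1` on the unit circle, hence on the closed unit
disc by the maximum modulus principle. Every `z` has a preimage `y` in the punctured disc whose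
partner root `y⁻¹` has norm at most `‖z‖ + √(‖z‖ ^ 2 + 1)`, which is `1 + √2` on the unit circle,
and `|p z| = ‖y⁻¹‖ ^ L * |q y|`.
-/

open Polynomial Metric

noncomputable def joukowskiLift {K : Type*} [Field K] (L : ℕ) (p : K[X]) : K[X] :=
  ∑ k ∈ Finset.range (L + 1), C (p.coeff k) * (C 2⁻¹ * (X ^ 2 + 1)) ^ k * X ^ (L - k)

theorem eval_joukowskiLift {K : Type*} [Field K] {L : ℕ} {p : K[X]} (hdeg : p.natDegree ≤ L)
    {y : K} (hy : y ≠ 0) :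
    (joukowskiLift L p).eval y = y ^ L * p.eval ((y + y⁻¹) / 2) := by
  have hy' : y * ((y + y⁻¹) / 2) = 2⁻¹ * (y ^ 2 + 1) := by field_simp
  rw [eval_eq_sum_range' (Nat.lt_succ_of_le hdeg), Finset.mul_sum, joukowskiLift, eval_finsetSum]
  refine Finset.sum_congr rfl fun k hk => ?_
  obtain ⟨j, rfl⟩ := Nat.exists_eq_add_of_le (Nat.lt_succ_iff.mp (Finset.mem_range.mp hk))
  simp only [eval_mul, eval_C, eval_pow, eval_add, eval_X, eval_one, Nat.add_sub_cancel_left]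
  rw [← hy', mul_pow]
  ring

theorem add_inv_div_two_eq_re_of_norm_eq_one {w : ℂ} (hw : ‖w‖ = 1) :
    (w + w⁻¹) / 2 = (w.re : ℂ) := by
  rw [Complex.inv_eq_conj hw, Complex.add_conj]
  push_cast
  ring

theorem norm_eval_joukowskiLift_le_one {L : ℕ} {p : ℂ[X]} (hdeg : p.natDegree ≤ L)
    (hb : ∀ x : ℝ, x ∈ Set.Icc (-1 : ℝ) 1 → ‖p.eval (x : ℂ)‖ ≤ 1)
    {y : ℂ} (hy : ‖y‖ ≤ 1) : ‖(joukowskiLift L p).eval y‖ ≤ 1 := by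
  refine Complex.norm_le_of_forall_mem_frontier_norm_le isBounded_ball
    (joukowskiLift L p).differentiable.diffContOnCl (fun w hw => ?_)
    (by rwa [closure_ball _ one_ne_zero, mem_closedBall_zero_iff])
  rw [frontier_ball _ one_ne_zero, mem_sphere_zero_iff_norm] at hw
  rw [eval_joukowskiLift hdeg (norm_ne_zero_iff.mp (by rw [hw]; exact one_ne_zero)), norm_mul,
    norm_pow, hw, one_pow, one_mul, add_inv_div_two_eq_re_of_norm_eq_one hw]
  have hre := hw ▸ Complex.abs_re_le_norm w
  exact hb _ (abs_le.mp hre)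

theorem exists_joukowski_preimage (z : ℂ) :
    ∃ y : ℂ, y ≠ 0 ∧ ‖y‖ ≤ 1 ∧ ‖y⁻¹‖ ≤ ‖z‖ + √(‖z‖ ^ 2 + 1) ∧ (y + y⁻¹) / 2 = z := by
  obtain ⟨w, hw⟩ : ∃ w : ℂ, w ^ 2 = z ^ 2 - 1 := IsAlgClosed.exists_pow_nat_eq _ two_pos
  have hprod : (z + w) * (z - w) = 1 := by linear_combination -hw
  -- `z ± w` are the two preimages of `z`; their product is `1`, so one has norm at least `1`.
  wlog h : 1 ≤ ‖z + w‖ generalizing w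
  · refine this (-w) (by rw [neg_sq, hw]) (by linear_combination hprod) ?_
    rw [← sub_eq_add_neg, eq_inv_of_mul_eq_one_right hprod, norm_inv]
    exact one_le_inv_iff₀.mpr
      ⟨norm_pos_iff.mpr (left_ne_zero_of_mul_eq_one hprod), (not_le.mp h).le⟩
  have hinv : (z - w)⁻¹ = z + w := inv_eq_of_mul_eq_one_left hprod
  have hw_norm : ‖w‖ ≤ √(‖z‖ ^ 2 + 1) := by
    refine Real.le_sqrt_of_sq_le ?_
    calc ‖w‖ ^ 2 = ‖z ^ 2 - 1‖ := by rw [← norm_pow, hw]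
      _ ≤ ‖z ^ 2‖ + ‖(1 : ℂ)‖ := norm_sub_le _ _
      _ = ‖z‖ ^ 2 + 1 := by rw [norm_pow, norm_one]
  refine ⟨z - w, right_ne_zero_of_mul_eq_one hprod, ?_, ?_, ?_⟩
  · rw [eq_inv_of_mul_eq_one_right hprod, norm_inv]; exact inv_le_one_of_one_le₀ h
  · rw [hinv]; exact (norm_add_le _ _).trans (by linarith)
  · rw [hinv]; ring

theorem norm_eval_le_of_forall_Icc {L : ℕ} {p : ℂ[X]} (hdeg : p.natDegree ≤ L)
    (hb : ∀ x : ℝ, x ∈ Set.Icc (-1 : ℝ) 1 → ‖p.eval (x : ℂ)‖ ≤ 1) (z : ℂ) :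
    ‖p.eval z‖ ≤ (‖z‖ + √(‖z‖ ^ 2 + 1)) ^ L := by
  obtain ⟨y, hy0, hy1, hy_inv, rfl⟩ := exists_joukowski_preimage z
  have hlift := norm_eval_joukowskiLift_le_one hdeg hb hy1
  rw [eval_joukowskiLift hdeg hy0, norm_mul, norm_pow] at hlift
  calc ‖p.eval ((y + y⁻¹) / 2)‖
      = ‖y⁻¹‖ ^ L * (‖y‖ ^ L * ‖p.eval ((y + y⁻¹) / 2)‖) := by
        rw [norm_inv, ← mul_assoc, ← mul_pow, inv_mul_cancel₀ (norm_ne_zero_iff.mpr hy0), one_pow,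
          one_mul]
    _ ≤ ‖y⁻¹‖ ^ L * 1 := by gcongr
    _ ≤ _ := by rw [mul_one]; gcongr

theorem stmt_11 (L : ℕ) (p : Polynomial ℂ) (hdeg : p.natDegree ≤ L)
    (hb : ∀ x : ℝ, x ∈ Set.Icc (-1 : ℝ) 1 → ‖p.eval (x : ℂ)‖ ≤ 1) :
    ∀ z : ℂ, ‖z‖ = 1 → ‖p.eval z‖ ≤ (1 + Real.sqrt 2) ^ L := by
  intro z hz
  have h := norm_eval_le_of_forall_Icc hdeg hb z
  rwa [hz, one_pow, one_add_one_eq_two] at h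
end

section
/- Let p(x) = Σ_{i=0}^{L} a_i x^i be a polynomial with |p(x)| ≤ 1 for all x ∈ [−1, 1]. Then Σ_{i=0}^{L} |a_i|² ≤ (1 + √2)^{2L}. -/
/-!
The Joukowski map `J w = (w + w⁻¹) / 2` sends the unit circle onto `[-1, 1]`, and
`w ^ L * P (J w)` is a polynomial in `w`. It is bounded by `1` on the unit circle, hence on the
unit disk by the maximum modulus principle. Every `z` with `‖z‖ ≤ 1` is `J w` for a root `w` of
`w ^ 2 - 2 z w + 1`, and both `w` and `w⁻¹` have norm at most `1 + √2`; choosing the one of norm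
at most `1` gives `‖P z‖ ≤ (1 + √2) ^ L`. Parseval's identity on the unit circle turns this bound
into the bound on the sum of squares of the coefficients.
-/

open Polynomial Finset Metric Complex

namespace Complex

noncomputable def joukowski (w : ℂ) : ℂ := (w + w⁻¹) / 2

@[simp]
lemma joukowski_inv (w : ℂ) : joukowski w⁻¹ = joukowski w := by
  simp [joukowski, add_comm]

lemma joukowski_of_norm_eq_one {w : ℂ} (hw : ‖w‖ = 1) : joukowski w = w.re := by
  rw [joukowski, inv_eq_conj hw, add_conj]
  push_cast
  ring

lemma exists_joukowski_eq {z : ℂ} (hz : ‖z‖ ≤ 1) :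
    ∃ w ≠ 0, joukowski w = z ∧ ‖w‖ ≤ 1 + √2 ∧ ‖w⁻¹‖ ≤ 1 + √2 := by
  obtain ⟨s, hs⟩ := IsAlgClosed.exists_pow_nat_eq (z ^ 2 - 1) two_pos
  have hzs : (z + s) * (z - s) = 1 := by linear_combination -hs
  have hs2 : ‖s‖ ≤ √2 := by
    refine Real.le_sqrt_of_sq_le ?_
    calc ‖s‖ ^ 2 = ‖z ^ 2 - 1‖ := by rw [← hs, norm_pow]
      _ ≤ ‖z‖ ^ 2 + 1 := (norm_sub_le _ _).trans_eq (by rw [norm_pow, norm_one])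
      _ ≤ 2 := by nlinarith [norm_nonneg z]
  have hinv : (z + s)⁻¹ = z - s := inv_eq_of_mul_eq_one_right hzs
  refine ⟨z + s, left_ne_zero_of_mul_eq_one hzs, ?_, ?_, ?_⟩
  · rw [joukowski, hinv]; ring
  · exact (norm_add_le z s).trans (by linarith)
  · rw [hinv]; exact (norm_sub_le z s).trans (by linarith)

end Complex

namespace Polynomial

section Joukowski

variable {P : ℂ[X]} {L : ℕ} {M : ℝ}

lemma exists_differentiable_eq_pow_mul_eval_joukowski (hdeg : P.natDegree ≤ L) :
    ∃ q : ℂ → ℂ, Differentiable ℂ q ∧ ∀ w ≠ 0, q w = w ^ L * P.eval (joukowski w) := by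
  refine ⟨fun w ↦ ∑ i ∈ range (L + 1), P.coeff i * (w ^ (L - i) * ((w ^ 2 + 1) / 2) ^ i),
    by fun_prop, fun w hw ↦ ?_⟩
  rw [eval_eq_sum_range' (Nat.lt_succ_of_le hdeg), mul_sum]
  refine sum_congr rfl fun i hi ↦ ?_
  have hwL : w ^ L = w ^ (L - i) * w ^ i := by
    rw [← pow_add, Nat.sub_add_cancel (Nat.lt_succ_iff.mp (mem_range.mp hi))]
  have hJ : (w ^ 2 + 1) / 2 = w * joukowski w := by
    rw [joukowski]; field_simp
  rw [hJ, hwL]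
  ring

lemma pow_mul_norm_eval_joukowski_le (hdeg : P.natDegree ≤ L)
    (hP : ∀ x ∈ Set.Icc (-1 : ℝ) 1, ‖P.eval (x : ℂ)‖ ≤ M) {w : ℂ} (hw0 : w ≠ 0) (hw : ‖w‖ ≤ 1) :
    ‖w‖ ^ L * ‖P.eval (joukowski w)‖ ≤ M := by
  obtain ⟨q, hq, hqP⟩ := exists_differentiable_eq_pow_mul_eval_joukowski hdeg
  have hq_sphere : ∀ u ∈ frontier (ball (0 : ℂ) 1), ‖q u‖ ≤ M := by
    intro u hu
    rw [frontier_ball 0 one_ne_zero, mem_sphere_zero_iff_norm] at hu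
    rw [hqP u (norm_ne_zero_iff.mp (hu ▸ one_ne_zero)), norm_mul, norm_pow, hu, one_pow, one_mul,
      joukowski_of_norm_eq_one hu]
    exact hP _ (abs_le.mp (hu ▸ abs_re_le_norm u))
  have hq_disk := norm_le_of_forall_mem_frontier_norm_le isBounded_ball hq.diffContOnCl hq_sphere
    (by rwa [closure_ball 0 one_ne_zero, mem_closedBall_zero_iff])
  rwa [hqP w hw0, norm_mul, norm_pow] at hq_disk

lemma norm_eval_joukowski_le {R : ℝ} (hdeg : P.natDegree ≤ L)
    (hP : ∀ x ∈ Set.Icc (-1 : ℝ) 1, ‖P.eval (x : ℂ)‖ ≤ M) {w : ℂ} (hw0 : w ≠ 0)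
    (hwR : ‖w‖ ≤ R) (hwR' : ‖w⁻¹‖ ≤ R) :
    ‖P.eval (joukowski w)‖ ≤ M * R ^ L := by
  wlog hw : ‖w‖ ≤ 1 generalizing w
  · simpa using this (inv_ne_zero hw0) hwR' (by rwa [inv_inv]) (by
      rw [norm_inv]; exact inv_le_one_of_one_le₀ (le_of_not_ge hw))
  have hM : 0 ≤ M := (norm_nonneg _).trans (hP 0 (by norm_num))
  have hpos : 0 < ‖w‖ ^ L := pow_pos (norm_pos_iff.mpr hw0) L
  calc ‖P.eval (joukowski w)‖ ≤ M * ‖w⁻¹‖ ^ L := by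
        rw [norm_inv, inv_pow, ← div_eq_mul_inv, le_div_iff₀ hpos, mul_comm]
        exact pow_mul_norm_eval_joukowski_le hdeg hP hw0 hw
    _ ≤ M * R ^ L := by gcongr

lemma norm_eval_le_of_norm_le_one (hdeg : P.natDegree ≤ L)
    (hP : ∀ x ∈ Set.Icc (-1 : ℝ) 1, ‖P.eval (x : ℂ)‖ ≤ M) {z : ℂ} (hz : ‖z‖ ≤ 1) :
    ‖P.eval z‖ ≤ M * (1 + √2) ^ L := by
  obtain ⟨w, hw0, rfl, hw, hw'⟩ := exists_joukowski_eq hz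
  exact norm_eval_joukowski_le hdeg hP hw0 hw hw'

end Joukowski

lemma sum_sq_norm_coeff_le_of_norm_eval_le {P : ℂ[X]} {M : ℝ}
    (hP : ∀ z : ℂ, ‖z‖ = 1 → ‖P.eval z‖ ≤ M) :
    ∑ i ∈ P.support, ‖P.coeff i‖ ^ 2 ≤ M ^ 2 := by
  rw [sum_sq_norm_coeff_eq_circleAverage]
  refine Real.circleAverage_mono_on_of_le_circle ?_ fun z hz ↦ ?_
  · exact (P.continuous.norm.pow 2).continuousOn.circleIntegrable'
  · rw [abs_one, mem_sphere_zero_iff_norm] at hz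
    exact pow_le_pow_left₀ (norm_nonneg _) (hP z hz) 2

end Polynomial

theorem stmt_12 (L : ℕ) (p : Polynomial ℝ) (hdeg : p.natDegree ≤ L)
    (hb : ∀ x ∈ Set.Icc (-1 : ℝ) 1, |p.eval x| ≤ 1) :
    ∑ i ∈ Finset.range (L + 1), (p.coeff i) ^ 2 ≤ (1 + Real.sqrt 2) ^ (2 * L) := by
  set P : ℂ[X] := p.map ofRealHom
  have hPdeg : P.natDegree ≤ L := natDegree_map_le.trans hdeg
  have hPx : ∀ x ∈ Set.Icc (-1 : ℝ) 1, ‖P.eval (x : ℂ)‖ ≤ 1 := fun x hx ↦ by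
    rw [eval_map, ← ofRealHom_eq_coe, eval₂_at_apply, ofRealHom_eq_coe, norm_real,
      Real.norm_eq_abs]
    exact hb x hx
  have hcoeff : ∑ i ∈ range (L + 1), p.coeff i ^ 2 = ∑ i ∈ P.support, ‖P.coeff i‖ ^ 2 := by
    rw [sum_subset (supp_subset_range (Nat.lt_succ_of_le hPdeg)) fun i _ hi ↦ by
      rw [notMem_support_iff.mp hi, norm_zero, zero_pow two_ne_zero]]
    refine sum_congr rfl fun i _ ↦ ?_
    rw [coeff_map, ofRealHom_eq_coe, norm_real, Real.norm_eq_abs, sq_abs]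
  calc ∑ i ∈ range (L + 1), p.coeff i ^ 2 = ∑ i ∈ P.support, ‖P.coeff i‖ ^ 2 := hcoeff
    _ ≤ (1 * (1 + √2) ^ L) ^ 2 := sum_sq_norm_coeff_le_of_norm_eval_le fun z hz ↦
        norm_eval_le_of_norm_le_one hPdeg hPx hz.le
    _ = (1 + √2) ^ (2 * L) := by ring
end

section
/- Let g_k be the k-point Gauss quadrature of the standard normal distribution N(0,1), i.e., the unique k-atomic distribution matching the first 2k−1 moments of N(0,1). Then E_{g_k}[H_j] = 0 for j = 1, …, 2k−1, and E_{g_k}[H_{2k}] = −k!, where H_j is the probabilists' Hermite polynomial of degree j. -/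
/-!
Stein's identity `E[X Q(X)] = E[Q'(X)]` for `X ~ N(0,1)`, iterated along the recursion
`H_{n+1} = X H_n - H_n'`, gives `E[H_n Q] = E[Q^{(n)}]`. Hence `E[H_n] = 0` for `n ≥ 1`, and
`E[H_k P] = k!` for every monic `P` of degree `k`.

Let `P` be the node polynomial of the support `S` of `g`. The measure `g` integrates every
polynomial of degree `≤ 2k - 1` like `N(0,1)` does. If `S` had fewer than `k` points, then
`E[P²]` would vanish, which is impossible, so `P` is monic of degree `k`. Since `P` vanishes on
`S`, `E_g[H_{2k}] = E_g[H_{2k} - P H_k]`. Here `H_{2k} - P H_k` has degree `< 2k`, so this is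
`E[H_{2k}] - E[H_k P] = -k!`.
-/

open MeasureTheory ProbabilityTheory Polynomial
open scoped NNReal

local notation "He " n:max => Polynomial.map (Int.castRingHom ℝ) (hermite n)

namespace ProbabilityTheory

lemma hasDerivAt_gaussianPDFReal (m : ℝ) (v : ℝ≥0) (x : ℝ) :
    HasDerivAt (gaussianPDFReal m v) (-(x - m) / v * gaussianPDFReal m v x) x := by
  have h : HasDerivAt (fun y => -(y - m) ^ 2 / (2 * v)) (-(x - m) / v) x := by
    refine ((((hasDerivAt_id x).sub_const m).pow 2).neg.div_const (2 * (v : ℝ))).congr_deriv ?_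
    simp only [id]; ring
  refine (h.exp.const_mul (√(2 * Real.pi * v))⁻¹).congr_deriv ?_
  rw [gaussianPDFReal]; ring

end ProbabilityTheory

namespace MeasureTheory

lemma integrable_of_ae_mem_finset {α E : Type*} [MeasurableSpace α] [MeasurableSingletonClass α]
    [NormedAddCommGroup E] {μ : Measure α} [IsFiniteMeasure μ] {S : Finset α}
    (hS : ∀ᵐ x ∂μ, x ∈ S) (f : α → E) : Integrable f μ := by
  rw [← Measure.restrict_eq_self_of_ae_mem hS]
  exact IntegrableOn.finset

end MeasureTheory

namespace Polynomial

lemma integral_eval_eq_of_integral_pow_eq {μ ν : Measure ℝ} [IsProbabilityMeasure μ]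
    [IsProbabilityMeasure ν] (hμ : ∀ i : ℕ, Integrable (fun x => x ^ i) μ)
    (hν : ∀ i : ℕ, Integrable (fun x => x ^ i) ν) {n : ℕ}
    (h : ∀ j, 1 ≤ j → j ≤ n → ∫ x, x ^ j ∂μ = ∫ x, x ^ j ∂ν) {Q : ℝ[X]}
    (hQ : Q.natDegree ≤ n) : ∫ x, Q.eval x ∂μ = ∫ x, Q.eval x ∂ν := by
  have hmoment : ∀ j ≤ n, ∫ x, x ^ j ∂μ = ∫ x, x ^ j ∂ν := by
    intro j hj
    rcases j.eq_zero_or_pos with rfl | hj0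
    · simp
    · exact h j hj0 hj
  simp_rw [eval_eq_sum_range' (Nat.lt_succ_of_le hQ)]
  rw [integral_finsetSum _ fun i _ => (hμ i).const_mul _,
    integral_finsetSum _ fun i _ => (hν i).const_mul _]
  refine Finset.sum_congr rfl fun i hi => ?_
  rw [integral_const_mul, integral_const_mul,
    hmoment i (Nat.lt_succ_iff.mp (Finset.mem_range.mp hi))]

lemma integral_eval_nodal_mul_eq_zero {μ : Measure ℝ} {S : Finset ℝ} (hS : ∀ᵐ x ∂μ, x ∈ S)
    (Q : ℝ[X]) : ∫ x, (Lagrange.nodal S id * Q).eval x ∂μ = 0 :=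
  integral_eq_zero_of_ae <| hS.mono fun x hx => by
    have hnode : (Lagrange.nodal S id).eval x = 0 := Lagrange.eval_nodal_at_node (v := id) hx
    simp [hnode]

lemma eq_zero_of_integral_eval_mul_self_eq_zero {μ : Measure ℝ} [NullSingletonClass μ]
    [NeZero μ] {Q : ℝ[X]} (hint : Integrable (fun x => (Q * Q).eval x) μ)
    (h : ∫ x, (Q * Q).eval x ∂μ = 0) : Q = 0 := by
  by_contra hQ
  have hsq : ∀ᵐ x ∂μ, (Q * Q).eval x = 0 :=
    (integral_eq_zero_iff_of_nonneg (fun x => by simp [mul_self_nonneg]) hint).mp h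
  have hroots : ∀ᵐ x ∂μ, ¬ (Q * Q).IsRoot x :=
    (finite_setOfPred_isRoot (mul_ne_zero hQ hQ)).countable.ae_notMem μ
  have hfalse : ∀ᵐ x ∂μ, False := by
    filter_upwards [hsq, hroots] with x hx hx' using hx' hx
  exact NeZero.ne μ (ae_eq_bot.mp (Filter.eventually_false_iff_eq_bot.mp hfalse))

lemma IsMonicOfDegree.iterate_derivative_self {R : Type*} [Semiring R] {p : R[X]} {n : ℕ}
    (hp : IsMonicOfDegree p n) : derivative^[n] p = C (n.factorial : R) := by
  have hdeg : (derivative^[n] p).natDegree = 0 := by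
    have := natDegree_iterate_derivative p n
    rw [hp.natDegree_eq, Nat.sub_self] at this
    omega
  rw [eq_C_of_natDegree_eq_zero hdeg, coeff_iterate_derivative, zero_add, Nat.descFactorial_self,
    ← hp.natDegree_eq, hp.monic.coeff_natDegree, nsmul_one]

lemma integrable_eval_gaussianReal (m : ℝ) (v : ℝ≥0) (Q : ℝ[X]) :
    Integrable (fun x => Q.eval x) (gaussianReal m v) := by
  induction Q using Polynomial.induction_on' with
  | add p q hp hq => simp only [eval_add]; exact hp.add hq
  | monomial n a =>
    simp only [eval_monomial]
    refine Integrable.const_mul ?_ a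
    exact ((memLp_id_gaussianReal n).integrable_norm_pow').mono' (by fun_prop)
      (ae_of_all _ fun x => (norm_pow x n).le)

lemma integral_eval_sub_gaussianReal (m : ℝ) (v : ℝ≥0) (p q : ℝ[X]) :
    ∫ x, (p - q).eval x ∂gaussianReal m v =
      ∫ x, p.eval x ∂gaussianReal m v - ∫ x, q.eval x ∂gaussianReal m v := by
  simp only [eval_sub]
  exact integral_sub (integrable_eval_gaussianReal m v p) (integrable_eval_gaussianReal m v q)

lemma integrable_gaussianPDFReal_mul_eval (m : ℝ) {v : ℝ≥0} (hv : v ≠ 0) (Q : ℝ[X]) :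
    Integrable fun x => gaussianPDFReal m v x * Q.eval x := by
  have h := integrable_eval_gaussianReal m v Q
  rw [gaussianReal_of_var_ne_zero m hv, integrable_withDensity_iff_integrable_smul'
    (measurable_gaussianPDF m v) (ae_of_all _ fun _ => gaussianPDF_lt_top)] at h
  simpa only [toReal_gaussianPDF, smul_eq_mul] using h

/-- Stein's identity. -/
lemma integral_sub_mul_eval_gaussianReal (m : ℝ) {v : ℝ≥0} (hv : v ≠ 0) (Q : ℝ[X]) :
    ∫ x, (x - m) * Q.eval x ∂gaussianReal m v =
      v * ∫ x, (derivative Q).eval x ∂gaussianReal m v := by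
  have hφQ : ∀ P : ℝ[X], Integrable fun x => gaussianPDFReal m v x * P.eval x :=
    integrable_gaussianPDFReal_mul_eval m hv
  have hderiv : ∀ x, HasDerivAt (fun y => gaussianPDFReal m v y * Q.eval y)
      (gaussianPDFReal m v x * (derivative Q).eval x
        - gaussianPDFReal m v x * ((X - C m) * Q).eval x / v) x := fun x =>
    ((hasDerivAt_gaussianPDFReal m v x).mul (Q.hasDerivAt x)).congr_deriv (by simp; ring)
  have key := integral_eq_zero_of_hasDerivAt_of_integrable hderiv
    ((hφQ _).sub ((hφQ _).div_const _)) (hφQ Q)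
  rw [integral_sub (hφQ _) ((hφQ _).div_const _), integral_div, sub_eq_zero,
    eq_div_iff (NNReal.coe_ne_zero.mpr hv)] at key
  simp_rw [integral_gaussianReal_eq_integral_smul hv, smul_eq_mul]
  simpa [mul_comm] using key.symm

lemma integral_eval_X_mul_gaussianReal (Q : ℝ[X]) :
    ∫ x, (X * Q).eval x ∂gaussianReal 0 1 = ∫ x, (derivative Q).eval x ∂gaussianReal 0 1 := by
  simpa using integral_sub_mul_eval_gaussianReal 0 one_ne_zero Q

lemma isMonicOfDegree_map_hermite (n : ℕ) : IsMonicOfDegree (He n) n :=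
  ⟨(natDegree_map_eq_of_injective (RingHom.injective_int _) _).trans natDegree_hermite,
    (hermite_monic n).map _⟩

lemma integral_eval_map_hermite_mul (n : ℕ) (Q : ℝ[X]) :
    ∫ x, (He n * Q).eval x ∂gaussianReal 0 1 =
      ∫ x, (derivative^[n] Q).eval x ∂gaussianReal 0 1 := by
  induction n generalizing Q with
  | zero => simp
  | succ n ih =>
    have hrec : He (n + 1) * Q = X * (He n * Q) - derivative (He n) * Q := by
      rw [hermite_succ, Polynomial.map_sub, Polynomial.map_mul, map_X, derivative_map]; ring
    rw [hrec, integral_eval_sub_gaussianReal, integral_eval_X_mul_gaussianReal, derivative_mul,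
      ← integral_eval_sub_gaussianReal, add_sub_cancel_left, ih, Function.iterate_succ_apply]

lemma integral_eval_map_hermite {n : ℕ} (hn : n ≠ 0) :
    ∫ x, (He n).eval x ∂gaussianReal 0 1 = 0 := by
  simpa [iterate_derivative_one (Nat.pos_of_ne_zero hn)] using integral_eval_map_hermite_mul n 1

lemma integral_eval_map_hermite_mul_of_isMonicOfDegree {n : ℕ} {Q : ℝ[X]}
    (hQ : IsMonicOfDegree Q n) : ∫ x, (He n * Q).eval x ∂gaussianReal 0 1 = n.factorial := by
  rw [integral_eval_map_hermite_mul, hQ.iterate_derivative_self]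
  simp

lemma card_eq_of_integral_eval_eq_gaussianReal {μ : Measure ℝ} {S : Finset ℝ} {k : ℕ}
    (hS : ∀ᵐ x ∂μ, x ∈ S) (hcard : S.card ≤ k)
    (hexact : ∀ Q : ℝ[X], Q.natDegree ≤ 2 * k - 1 →
      ∫ x, Q.eval x ∂μ = ∫ x, Q.eval x ∂gaussianReal 0 1) :
    S.card = k := by
  have := nullSingletonClass_gaussianReal (μ := 0) one_ne_zero
  by_contra hne
  -- otherwise the squared node polynomial has degree `< 2k`, so its Gaussian mean is its `μ`-mean `0`
  have hdeg : (Lagrange.nodal S id * Lagrange.nodal S id).natDegree ≤ 2 * k - 1 :=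
    natDegree_mul_le.trans (by rw [Lagrange.natDegree_nodal]; omega)
  have hzero := (hexact _ hdeg).symm.trans (integral_eval_nodal_mul_eq_zero hS _)
  exact Lagrange.nodal_monic.ne_zero
    (eq_zero_of_integral_eval_mul_self_eq_zero (integrable_eval_gaussianReal 0 1 _) hzero)

end Polynomial

theorem stmt_14 (k : ℕ) (hk : 1 ≤ k) (g : Measure ℝ) [IsProbabilityMeasure g]
    (S : Finset ℝ) (hcard : S.card ≤ k) (hsupp : g ↑S = 1)
    (hm : ∀ j, 1 ≤ j → j ≤ 2 * k - 1 →
      ∫ x, x ^ j ∂g = ∫ x, x ^ j ∂(gaussianReal 0 1)) :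
    (∀ j, 1 ≤ j → j ≤ 2 * k - 1 →
      ∫ x, ((Polynomial.hermite j).map (Int.castRingHom ℝ)).eval x ∂g = 0) ∧
    ∫ x, ((Polynomial.hermite (2 * k)).map (Int.castRingHom ℝ)).eval x ∂g
      = -(k.factorial : ℝ) := by
  have hS : ∀ᵐ x ∂g, x ∈ S :=
    ae_iff.2 ((prob_compl_eq_zero_iff S.finite_toSet.measurableSet).2 hsupp)
  have hint : ∀ f : ℝ → ℝ, Integrable f g := integrable_of_ae_mem_finset hS
  have hexact : ∀ Q : ℝ[X], Q.natDegree ≤ 2 * k - 1 →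
      ∫ x, Q.eval x ∂g = ∫ x, Q.eval x ∂gaussianReal 0 1 := fun Q =>
    integral_eval_eq_of_integral_pow_eq (fun _ => hint _)
      (fun i => by simpa using integrable_eval_gaussianReal 0 1 (X ^ i)) hm
  have hnodal : IsMonicOfDegree (Lagrange.nodal S id) k :=
    ⟨Lagrange.natDegree_nodal.trans (card_eq_of_integral_eval_eq_gaussianReal hS hcard hexact),
      Lagrange.nodal_monic⟩
  have hHe := isMonicOfDegree_map_hermite
  refine ⟨fun j hj hj' => ?_, ?_⟩
  · rw [hexact _ ((hHe j).natDegree_eq.trans_le hj'), integral_eval_map_hermite (by omega)]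
  have hdeg : (He (2 * k) - Lagrange.nodal S id * He k).natDegree ≤ 2 * k - 1 := by
    have := (hHe (2 * k)).natDegree_sub_lt (by omega) (by simpa [two_mul] using hnodal.mul (hHe k))
    omega
  calc _ = ∫ x, (He (2 * k) - Lagrange.nodal S id * He k).eval x ∂g := by
        simp only [eval_sub]
        rw [integral_sub (hint _) (hint _), integral_eval_nodal_mul_eq_zero hS, sub_zero]
    _ = -(k.factorial : ℝ) := by
        rw [hexact _ hdeg, integral_eval_sub_gaussianReal, integral_eval_map_hermite (by omega),
          mul_comm, integral_eval_map_hermite_mul_of_isMonicOfDegree hnodal, zero_sub]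
end

section
/- Let ν and ν' be discrete probability distributions on ℝ, supported on a common set of ℓ points contained in [−1,1], and suppose |m_i(ν) − m_i(ν')| ≤ δ for i = 1, …, ℓ−1. Then W₁(ν, ν') ≤ C ℓ δ^{1/(ℓ−1)} for an absolute constant C (one may take C = 4e). -/
/-!
Let `t₀ < ⋯ < tₙ` (`n = ℓ - 1`) be the common support, `p`, `q` the two weight vectors and
`U_r = ∑_{j ≤ r} (p_j - q_j)`. The quantile coupling gives `W₁ ≤ ∑_{r < n} (t_{r+1} - t_r) |U_r|`.
Fix `r` and put `Δ = t_{r+1} - t_r`. If `P` interpolates the step function `f = 1_{j ≤ r}` at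
the nodes, then `U_r = ∑_j (p_j - q_j) P(t_j)` is a combination of moment differences with the
coefficients of `P`. In Newton form `P = ∑_k f[t₀, …, t_k] ∏_{w < k} (X - t_w)`, each nodal
product has coefficient sum at most `2^k`, and a divided difference of a step function is nonzero
only when its nodes straddle the jump, where it is at most `(2/Δ)^k`. Hence
`|U_r| ≤ 2δ(4/Δ)^n` besides `|U_r| ≤ 1`, so `Δ |U_r| ≤ 8 δ^{1/n}`, and summing over `r`
gives `W₁ ≤ 8 n δ^{1/n} ≤ 4 e ℓ δ^{1/(ℓ-1)}`.
-/

open MeasureTheory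

open Finset Polynomial

namespace Lagrange

variable {F ι : Type*} [Field F] [DecidableEq ι] {s : Finset ι} {v r : ι → F}

/-- The divided difference `r[v_i : i ∈ s]`, taken as the coefficient of `X ^ (#s - 1)` of the
interpolant; the usual recursion is `divDiff_eq_sub_div`. -/
noncomputable def divDiff (s : Finset ι) (v r : ι → F) : F :=
  (interpolate s v r).coeff (#s - 1)

theorem coeff_interpolate_eq_zero (hvs : Set.InjOn v s) {m : ℕ} (hm : #s ≤ m) :
    (interpolate s v r).coeff m = 0 :=
  coeff_eq_zero_of_degree_lt ((degree_interpolate_lt _ hvs).trans_le (by exact_mod_cast hm))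

theorem divDiff_singleton (i : ι) : divDiff {i} v r = r i := by
  simp [divDiff]

theorem divDiff_eq_zero_of_eqOn_const (hvs : Set.InjOn v s) (hs : 2 ≤ #s) {c : F}
    (hr : ∀ i ∈ s, r i = c) : divDiff s v r = 0 := by
  have hconst : interpolate s v r = C c := by
    rw [interpolate_eq_of_values_eq_on r (c • 1) (by simpa using hr), map_smul,
      interpolate_one hvs (card_pos.mp (by omega)), smul_eq_C_mul, mul_one]
  rw [divDiff, hconst, coeff_C, if_neg (by omega)]

theorem divDiff_eq_sub_div (hvs : Set.InjOn v s) {i j : ι} (hi : i ∈ s) (hj : j ∈ s)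
    (hij : i ≠ j) :
    divDiff s v r = (divDiff (s.erase i) v r - divDiff (s.erase j) v r) / (v j - v i) := by
  obtain ⟨m, hm⟩ : ∃ m, #s = m + 2 :=
    ⟨#s - 2, by
      have := card_le_card (insert_subset hi (singleton_subset_iff.mpr hj))
      rw [card_pair hij] at this; omega⟩
  have hcoeff : ∀ (k : ι) {l : ι}, l ∈ s →
      (interpolate (s.erase l) v r * basisDivisor (v k) (v l)).coeff (m + 1)
        = divDiff (s.erase l) v r / (v k - v l) := by
    intro k l hl
    have hcard : #(s.erase l) = m + 1 := by rw [card_erase_of_mem hl, hm]; rfl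
    rw [basisDivisor, mul_left_comm, coeff_C_mul, mul_comm, coeff_mul_X_sub_C,
      coeff_interpolate_eq_zero (hvs.mono (coe_subset.mpr (erase_subset l s))) hcard.le,
      zero_mul, sub_zero, divDiff, hcard, Nat.add_sub_cancel, div_eq_mul_inv]
  rw [divDiff, interpolate_eq_add_interpolate_erase r hvs hi hj hij, hm, coeff_add,
    show m + 2 - 1 = m + 1 from rfl, hcoeff _ hj, hcoeff _ hi, ← neg_sub (v j), div_neg]
  ring

theorem interpolate_insert {a : ι} (hvs : Set.InjOn v ↑(insert a s)) (ha : a ∉ s) :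
    interpolate (insert a s) v r
      = interpolate s v r + C (divDiff (insert a s) v r) * nodal s v := by
  have hvs' : Set.InjOn v s := hvs.mono (coe_subset.mpr (subset_insert a s))
  refine eq_of_degree_sub_lt_of_eval_index_eq s hvs' ?_ fun i hi => ?_
  · rw [degree_lt_iff_coeff_zero]
    intro m hm
    rw [coeff_sub, coeff_add, coeff_C_mul, coeff_interpolate_eq_zero hvs' hm]
    rcases hm.eq_or_lt with rfl | hlt
    · rw [divDiff, card_insert_of_notMem ha, Nat.add_sub_cancel,
        ← natDegree_nodal (v := v), nodal_monic.coeff_natDegree]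
      ring
    · rw [coeff_interpolate_eq_zero hvs (by rw [card_insert_of_notMem ha]; omega),
        coeff_eq_zero_of_natDegree_lt (natDegree_nodal (v := v) ▸ hlt)]
      ring
  · rw [eval_add, eval_mul, eval_nodal_at_node hi, mul_zero, add_zero,
      eval_interpolate_at_node r hvs (mem_insert_of_mem hi), eval_interpolate_at_node r hvs' hi]

theorem interpolate_range_eq_sum_divDiff_mul_nodal (v r : ℕ → F) (n : ℕ)
    (hv : Set.InjOn v (range n)) :
    interpolate (range n) v r
      = ∑ k ∈ range n, C (divDiff (range (k + 1)) v r) * nodal (range k) v := by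
  induction n with
  | zero => simp
  | succ n ih =>
    rw [sum_range_succ, ← ih (hv.mono (by simp)), range_add_one,
      interpolate_insert (range_add_one ▸ hv) notMem_range_self]

end Lagrange

open Lagrange

theorem abs_divDiff_Icc_indicator_Iic_le {t : ℕ → ℝ} {r : ℕ} (hΔ : 0 < t (r + 1) - t r)
    (i k : ℕ) (ht : StrictMonoOn t (Set.Icc i (i + k))) :
    |divDiff (Icc i (i + k)) t ((Set.Iic r).indicator 1)| ≤ (2 / (t (r + 1) - t r)) ^ k := by
  induction k generalizing i with
  | zero =>
    rw [add_zero, Icc_self, divDiff_singleton, pow_zero]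
    by_cases h : i ∈ Set.Iic r <;> simp [h]
  | succ k ih =>
    have hinj : Set.InjOn t ↑(Icc i (i + (k + 1))) := by rw [coe_Icc]; exact ht.injOn
    by_cases hstr : i ≤ r ∧ r < i + (k + 1)
    · have hgap : t (r + 1) - t r ≤ t (i + k + 1) - t i := by
        have h1 := ht.monotoneOn ⟨le_rfl, by omega⟩ ⟨hstr.1, by omega⟩ hstr.1
        have h2 := ht.monotoneOn ⟨by omega, by omega⟩ ⟨by omega, by omega⟩
          (show r + 1 ≤ i + k + 1 by omega)
        linarith
      have hA := ih (i + 1) (ht.mono (Set.Icc_subset_Icc (by omega) (by omega)))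
      have hB := ih i (ht.mono (Set.Icc_subset_Icc le_rfl (by omega)))
      have hleft : (Icc i (i + (k + 1))).erase i = Icc (i + 1) (i + 1 + k) := by
        ext; simp only [mem_erase, mem_Icc]; omega
      have hright : (Icc i (i + (k + 1))).erase (i + (k + 1)) = Icc i (i + k) := by
        ext; simp only [mem_erase, mem_Icc]; omega
      rw [divDiff_eq_sub_div hinj (left_mem_Icc.mpr (by omega)) (right_mem_Icc.mpr (by omega))
        (by omega), hleft, hright, ← add_assoc, abs_div, abs_of_pos (hΔ.trans_le hgap), pow_succ]
      calc _ ≤ (2 / (t (r + 1) - t r)) ^ k * 2 / (t (r + 1) - t r) := by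
            gcongr
            calc _ ≤ _ := abs_sub _ _
              _ ≤ _ := add_le_add hA hB
              _ = _ := by ring
        _ = _ := by ring
    · have hconst : ∀ j ∈ Icc i (i + (k + 1)),
          (Set.Iic r).indicator (1 : ℕ → ℝ) j = if i + (k + 1) ≤ r then 1 else 0 := by
        intro j hj
        rw [mem_Icc] at hj
        by_cases hr : i + (k + 1) ≤ r
        · simp [hr, show j ≤ r by omega]
        · simp [hr, show ¬ j ≤ r by omega]
      rw [divDiff_eq_zero_of_eqOn_const hinj (by simp; omega) hconst, abs_zero]
      positivity

theorem sum_abs_coeff_mul_X_sub_C_le (p : ℝ[X]) (a : ℝ) (N : ℕ) :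
    ∑ i ∈ range N, |(p * (X - C a)).coeff i| ≤ (1 + |a|) * ∑ i ∈ range N, |p.coeff i| := by
  cases N with
  | zero => simp
  | succ N =>
    have hN : ∑ i ∈ range N, |p.coeff i| ≤ ∑ i ∈ range (N + 1), |p.coeff i| :=
      sum_le_sum_of_subset_of_nonneg (range_subset_range.mpr N.le_succ) fun _ _ _ => abs_nonneg _
    calc ∑ i ∈ range (N + 1), |(p * (X - C a)).coeff i|
        = ∑ i ∈ range N, |p.coeff i - p.coeff (i + 1) * a| + |a| * |p.coeff 0| := by
          simp [sum_range_succ', coeff_mul_X_sub_C, mul_coeff_zero, abs_mul, mul_comm]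
      _ ≤ ∑ i ∈ range N, |p.coeff i| + |a| * ∑ i ∈ range (N + 1), |p.coeff i| := by
          rw [sum_range_succ' (fun i => |p.coeff i|), mul_add, mul_sum, ← add_assoc,
            ← sum_add_distrib]
          gcongr with i
          exact (abs_sub _ _).trans_eq (by rw [abs_mul, mul_comm])
      _ ≤ _ := by nlinarith [abs_nonneg a]

theorem sum_abs_coeff_nodal_le {ι : Type*} (s : Finset ι) (v : ι → ℝ)
    (hv : ∀ i ∈ s, |v i| ≤ 1) (N : ℕ) : ∑ i ∈ range N, |(nodal s v).coeff i| ≤ 2 ^ #s := by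
  classical
  induction s using Finset.induction_on with
  | empty =>
    simp only [nodal_empty, coeff_one, card_empty, pow_zero, apply_ite, abs_one, abs_zero]
    rw [sum_ite_eq' (range N) 0 (fun _ => (1 : ℝ))]
    split_ifs <;> norm_num
  | insert a s ha ih =>
    rw [nodal_insert_eq_nodal ha, mul_comm, card_insert_of_notMem ha, pow_succ]
    have h1 := ih fun i hi => hv i (mem_insert_of_mem hi)
    have h2 := hv a (mem_insert_self a s)
    calc _ ≤ (1 + |v a|) * ∑ i ∈ range N, |(nodal s v).coeff i| :=
          sum_abs_coeff_mul_X_sub_C_le _ _ _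
      _ ≤ 2 * 2 ^ #s := by gcongr; linarith
      _ = _ := mul_comm _ _

theorem abs_sum_mul_eval_le {ι : Type*} (J : Finset ι) (u t : ι → ℝ) {N : ℕ} {δ : ℝ}
    (hM : ∀ i < N, |∑ j ∈ J, u j * t j ^ i| ≤ δ) {p : ℝ[X]} (hp : p.natDegree < N) :
    |∑ j ∈ J, u j * p.eval (t j)| ≤ δ * ∑ i ∈ range N, |p.coeff i| := by
  calc |∑ j ∈ J, u j * p.eval (t j)|
      = |∑ i ∈ range N, p.coeff i * ∑ j ∈ J, u j * t j ^ i| := by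
        simp_rw [eval_eq_sum_range' hp, mul_sum]
        rw [sum_comm]
        congr 1; refine sum_congr rfl fun _ _ => sum_congr rfl fun _ _ => by ring
    _ ≤ ∑ i ∈ range N, |p.coeff i| * δ := by
        refine (abs_sum_le_sum_abs _ _).trans (sum_le_sum fun i hi => ?_)
        rw [abs_mul]
        exact mul_le_mul_of_nonneg_left (hM i (mem_range.mp hi)) (abs_nonneg _)
    _ = _ := by rw [← sum_mul, mul_comm]

theorem abs_sum_range_le_of_moments {n r : ℕ} {t u : ℕ → ℝ} {δ : ℝ}
    (ht : StrictMonoOn t (Set.Iic n)) (htb : ∀ j ≤ n, |t j| ≤ 1) (hr : r < n)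
    (hM : ∀ i ≤ n, |∑ j ∈ range (n + 1), u j * t j ^ i| ≤ δ) :
    |∑ j ∈ range (r + 1), u j| ≤ δ * ∑ k ∈ range (n + 1), (4 / (t (r + 1) - t r)) ^ k := by
  set f : ℕ → ℝ := (Set.Iic r).indicator 1
  have hinj : Set.InjOn t (range (n + 1)) := by
    rw [Nat.range_succ_eq_Iic, coe_Iic]; exact ht.injOn
  have hΔ : 0 < t (r + 1) - t r :=
    sub_pos.mpr (ht (by simp; omega) (by simp; omega) r.lt_succ_self)
  have hU : ∑ j ∈ range (r + 1), u j
      = ∑ k ∈ range (n + 1), divDiff (range (k + 1)) t f *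
          ∑ j ∈ range (n + 1), u j * (nodal (range k) t).eval (t j) := by
    calc ∑ j ∈ range (r + 1), u j
        = ∑ j ∈ range (r + 1), u j * f j + ∑ j ∈ Ico (r + 1) (n + 1), u j * f j := by
          rw [sum_eq_zero (s := Ico (r + 1) (n + 1)) fun j hj => ?_, add_zero]
          · exact sum_congr rfl fun j hj => by simp [f, Nat.lt_succ_iff.mp (mem_range.mp hj)]
          · simp [f, show ¬ j ≤ r by simp at hj; omega]
      _ = ∑ j ∈ range (n + 1), u j * (interpolate (range (n + 1)) t f).eval (t j) := by
          rw [sum_range_add_sum_Ico _ (by omega)]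
          exact sum_congr rfl fun j hj => by rw [eval_interpolate_at_node f hinj hj]
      _ = _ := by
          simp_rw [interpolate_range_eq_sum_divDiff_mul_nodal t f _ hinj, eval_finsetSum,
            eval_mul, eval_C, mul_sum]
          rw [sum_comm]
          exact sum_congr rfl fun _ _ => sum_congr rfl fun _ _ => by ring
  rw [hU, mul_sum]
  refine (abs_sum_le_sum_abs _ _).trans (sum_le_sum fun k hk => ?_)
  have hk : k ≤ n := Nat.lt_succ_iff.mp (mem_range.mp hk)
  have hdd : |divDiff (range (k + 1)) t f| ≤ (2 / (t (r + 1) - t r)) ^ k := by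
    have := abs_divDiff_Icc_indicator_Iic_le hΔ 0 k (ht.mono fun j hj => by simp at hj ⊢; omega)
    rwa [zero_add, ← Nat.range_succ_eq_Icc_zero] at this
  have hnodal : |∑ j ∈ range (n + 1), u j * (nodal (range k) t).eval (t j)| ≤ δ * 2 ^ k := by
    have hcoeff := sum_abs_coeff_nodal_le (range k) t (fun j hj => htb j (by simp at hj; omega))
      (n + 1)
    rw [card_range] at hcoeff
    have hδ : 0 ≤ δ := (abs_nonneg _).trans (hM 0 (Nat.zero_le n))
    exact (abs_sum_mul_eval_le _ u t (N := n + 1) (fun i hi => hM i (by omega))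
      (by rw [natDegree_nodal, card_range]; omega)).trans (mul_le_mul_of_nonneg_left hcoeff hδ)
  calc |divDiff (range (k + 1)) t f * ∑ j ∈ range (n + 1), u j * (nodal (range k) t).eval (t j)|
      ≤ (2 / (t (r + 1) - t r)) ^ k * (δ * 2 ^ k) := by
        rw [abs_mul]; exact mul_le_mul hdd hnodal (abs_nonneg _) (by positivity)
    _ = δ * (4 / (t (r + 1) - t r)) ^ k := by
        rw [show (4 : ℝ) = 2 * 2 by norm_num, mul_div_assoc, mul_pow]; ring

theorem geom_sum_range_succ_le_two_mul_pow {x : ℝ} (hx : 2 ≤ x) (n : ℕ) :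
    ∑ k ∈ range (n + 1), x ^ k ≤ 2 * x ^ n := by
  induction n with
  | zero => norm_num
  | succ n ih =>
    rw [sum_range_succ, pow_succ]
    nlinarith [pow_nonneg (by linarith : (0 : ℝ) ≤ x) n]

theorem mul_le_of_le_one_of_le_pow {Δ a θ : ℝ} {n : ℕ} (hn : n ≠ 0) (hΔ : 0 < Δ) (hθ : 0 ≤ θ)
    (ha₁ : a ≤ 1) (ha : a ≤ 2 * (4 * θ / Δ) ^ n) : Δ * a ≤ 8 * θ := by
  rcases le_or_gt Δ (4 * θ) with hle | hlt
  · nlinarith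
  · have hq : 4 * θ / Δ ≤ 1 := (div_le_one hΔ).mpr hlt.le
    have hpow : (4 * θ / Δ) ^ n ≤ 4 * θ / Δ := pow_le_of_le_one (by positivity) hq hn
    calc Δ * a ≤ Δ * (2 * (4 * θ / Δ)) := by gcongr; linarith
      _ = 8 * θ := by field_simp; ring

theorem gap_mul_abs_sum_range_le {n r : ℕ} {t u : ℕ → ℝ} {θ : ℝ}
    (ht : StrictMonoOn t (Set.Iic n)) (htb : ∀ j ≤ n, |t j| ≤ 1) (hr : r < n) (hθ : 0 ≤ θ)
    (hM : ∀ i ≤ n, |∑ j ∈ range (n + 1), u j * t j ^ i| ≤ θ ^ n)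
    (hU : |∑ j ∈ range (r + 1), u j| ≤ 1) :
    |t (r + 1) - t r| * |∑ j ∈ range (r + 1), u j| ≤ 8 * θ := by
  have hΔ : 0 < t (r + 1) - t r :=
    sub_pos.mpr (ht (by simp; omega) (by simp; omega) r.lt_succ_self)
  have hΔ2 : t (r + 1) - t r ≤ 2 := by
    linarith [(abs_le.mp (htb (r + 1) hr)).2, (abs_le.mp (htb r hr.le)).1]
  rw [abs_of_pos hΔ]
  refine mul_le_of_le_one_of_le_pow (n := n) (by omega) hΔ hθ hU ?_
  calc |∑ j ∈ range (r + 1), u j|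
      ≤ θ ^ n * ∑ k ∈ range (n + 1), (4 / (t (r + 1) - t r)) ^ k :=
        abs_sum_range_le_of_moments ht htb hr hM
    _ ≤ θ ^ n * (2 * (4 / (t (r + 1) - t r)) ^ n) := by
        gcongr
        exact geom_sum_range_succ_le_two_mul_pow (by rw [le_div_iff₀ hΔ]; linarith) n
    _ = 2 * (4 * θ / (t (r + 1) - t r)) ^ n := by rw [mul_div_assoc, mul_pow]; ring

theorem W1_map_le {α : Type*} [MeasurableSpace α] (μ : Measure α) [IsProbabilityMeasure μ]
    {f g : α → ℝ} (hf : Measurable f) (hg : Measurable g) :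
    W1 (μ.map f) (μ.map g) ≤ ∫ x, |f x - g x| ∂μ := by
  have hfg : Measurable fun x => (f x, g x) := hf.prodMk hg
  have hπ : IsProbabilityMeasure (μ.map fun x => (f x, g x)) :=
    Measure.isProbabilityMeasure_map hfg.aemeasurable
  refine csInf_le ⟨0, ?_⟩ ⟨_, hπ, ?_, ?_, ?_⟩
  · rintro _ ⟨π, -, -, -, rfl⟩
    exact integral_nonneg fun _ => abs_nonneg _
  · rw [Measure.map_map measurable_fst hfg]; rfl
  · rw [Measure.map_map measurable_snd hfg]; rfl
  · rw [integral_map hfg.aemeasurable (by fun_prop)]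

/-- The quantile function of `∑ j ≤ n, (P (j + 1) - P j) • δ_{t j}`: it equals `t j` on
`[P j, P (j + 1))`. -/
noncomputable def stepQuantile (t P : ℕ → ℝ) (n : ℕ) (x : ℝ) : ℝ :=
  t 0 + ∑ r ∈ range n, (t (r + 1) - t r) * (Set.Ici (P (r + 1))).indicator 1 x

theorem measurable_stepQuantile (t P : ℕ → ℝ) (n : ℕ) : Measurable (stepQuantile t P n) :=
  measurable_const.add <| Finset.measurable_sum _ fun _ _ =>
    measurable_const.mul (measurable_const.indicator measurableSet_Ici)

theorem stepQuantile_eq_of_mem_Ico {t P : ℕ → ℝ} {n j : ℕ} (hP : Monotone P) (hj : j ≤ n)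
    {x : ℝ} (hx : x ∈ Set.Ico (P j) (P (j + 1))) : stepQuantile t P n x = t j := by
  have hterm : ∀ r ∈ range n, (t (r + 1) - t r) * (Set.Ici (P (r + 1))).indicator 1 x
      = if r < j then t (r + 1) - t r else 0 := by
    intro r _
    by_cases hrj : r < j
    · rw [if_pos hrj, Set.indicator_of_mem (Set.mem_Ici.mpr ((hP hrj).trans hx.1)), Pi.one_apply,
        mul_one]
    · rw [if_neg hrj, Set.indicator_of_notMem
        (Set.notMem_Ici.mpr (hx.2.trans_le (hP (by omega : j + 1 ≤ r + 1)))), mul_zero]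
  rw [stepQuantile, sum_congr rfl hterm, ← sum_filter,
    show (range n).filter (· < j) = range j by ext; simp; omega, sum_range_sub]
  ring

theorem map_stepQuantile {t P : ℕ → ℝ} {n : ℕ} (hP : Monotone P) (hP0 : P 0 = 0)
    (hP1 : P (n + 1) = 1) :
    (volume.restrict (Set.Ico 0 1)).map (stepQuantile t P n)
      = ∑ j ∈ range (n + 1), ENNReal.ofReal (P (j + 1) - P j) • Measure.dirac (t j) := by
  have hcover : Set.Ico (0 : ℝ) 1 = ⋃ j ∈ range (n + 1), Set.Ico (P j) (P (j + 1)) := by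
    refine subset_antisymm (hP0 ▸ hP1 ▸ Ico_subset_biUnion_Ico (n + 1) P) ?_
    refine Set.iUnion₂_subset fun j hj => Set.Ico_subset_Ico (hP0 ▸ hP (Nat.zero_le j)) ?_
    exact hP1 ▸ hP (by simp at hj; omega)
  ext s hs
  have hpiece : ∀ j ∈ range (n + 1),
      volume (stepQuantile t P n ⁻¹' s ∩ Set.Ico (P j) (P (j + 1)))
        = ENNReal.ofReal (P (j + 1) - P j) * s.indicator 1 (t j) := by
    intro j hj
    have hT : ∀ x ∈ Set.Ico (P j) (P (j + 1)), stepQuantile t P n x = t j :=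
      fun x hx => stepQuantile_eq_of_mem_Ico hP (by simp at hj; omega) hx
    by_cases hjs : t j ∈ s
    · rw [Set.inter_eq_right.mpr fun x hx => by simp [hT x hx, hjs], Real.volume_Ico,
        Set.indicator_of_mem hjs, Pi.one_apply, mul_one]
    · rw [Set.indicator_of_notMem hjs, mul_zero,
        Set.eq_empty_of_forall_notMem (s := stepQuantile t P n ⁻¹' s ∩ _)
          fun x hx => hjs (hT x hx.2 ▸ hx.1), measure_empty]
  rw [Measure.map_apply (measurable_stepQuantile t P n) hs,
    Measure.restrict_apply (measurable_stepQuantile t P n hs), hcover, Set.inter_iUnion₂,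
    measure_biUnion_finset, Measure.coe_finsetSum, Finset.sum_apply]
  · refine sum_congr rfl fun j hj => ?_
    rw [hpiece j hj, Measure.smul_apply, Measure.dirac_apply' _ hs, smul_eq_mul]
  · intro i _ j _ hij
    have := hP.pairwise_disjoint_on_Ico_succ hij
    simp only [Function.onFun, Order.succ_eq_add_one] at this
    exact this.mono Set.inter_subset_right Set.inter_subset_right
  · exact fun j _ => (measurable_stepQuantile t P n hs).inter measurableSet_Ico

theorem integral_abs_indicator_Ici_sub_le (s : Set ℝ) (a b : ℝ) :
    ∫ x, |(Set.Ici a).indicator (1 : ℝ → ℝ) x - (Set.Ici b).indicator 1 x| ∂(volume.restrict s)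
      ≤ |a - b| := by
  wlog hab : a ≤ b generalizing a b
  · simpa only [abs_sub_comm] using this b a (le_of_not_ge hab)
  have hdiff : ∀ x, |(Set.Ici a).indicator (1 : ℝ → ℝ) x - (Set.Ici b).indicator 1 x|
      = (Set.Ico a b).indicator 1 x := by
    intro x
    by_cases hxb : b ≤ x
    · simp [Set.indicator, hxb, hab.trans hxb]
    · by_cases hxa : a ≤ x <;> simp [Set.indicator, hxa, hxb]
  simp_rw [hdiff]
  rw [integral_indicator_one measurableSet_Ico, abs_of_nonpos (sub_nonpos.mpr hab), neg_sub,
    measureReal_restrict_apply measurableSet_Ico, ← Real.volume_real_Ico_of_le hab]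
  exact measureReal_mono Set.inter_subset_left (by simp)

theorem integral_abs_stepQuantile_sub_le (t P Q : ℕ → ℝ) (n : ℕ) :
    ∫ x, |stepQuantile t P n x - stepQuantile t Q n x| ∂(volume.restrict (Set.Ico 0 1))
      ≤ ∑ r ∈ range n, |t (r + 1) - t r| * |P (r + 1) - Q (r + 1)| := by
  set g : ℕ → ℝ → ℝ := fun r x =>
    (Set.Ici (P (r + 1))).indicator 1 x - (Set.Ici (Q (r + 1))).indicator 1 x
  have hg : ∀ r, Integrable (g r) (volume.restrict (Set.Ico 0 1)) := fun r =>
    ((integrable_const 1).indicator measurableSet_Ici).sub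
      ((integrable_const 1).indicator measurableSet_Ici)
  calc ∫ x, |stepQuantile t P n x - stepQuantile t Q n x| ∂(volume.restrict (Set.Ico 0 1))
      ≤ ∫ x, ∑ r ∈ range n, |t (r + 1) - t r| * |g r x| ∂(volume.restrict (Set.Ico 0 1)) := by
        refine integral_mono_of_nonneg (.of_forall fun _ => abs_nonneg _)
          (integrable_finsetSum _ fun r _ => (hg r).abs.const_mul _) (.of_forall fun x => ?_)
        simp only [stepQuantile, g, add_sub_add_left_eq_sub, ← sum_sub_distrib, ← mul_sub,
          ← abs_mul]
        exact abs_sum_le_sum_abs _ _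
    _ = ∑ r ∈ range n, |t (r + 1) - t r| * ∫ x, |g r x| ∂(volume.restrict (Set.Ico 0 1)) := by
        rw [integral_finsetSum _ fun r _ => (hg r).abs.const_mul _]
        simp_rw [integral_const_mul]
    _ ≤ _ := by
        gcongr with r
        exact integral_abs_indicator_Ici_sub_le _ _ _

theorem W1_sum_smul_dirac_le (t p q : ℕ → ℝ) (n : ℕ) (hp : ∀ j, 0 ≤ p j) (hq : ∀ j, 0 ≤ q j)
    (hp1 : ∑ j ∈ range (n + 1), p j = 1) (hq1 : ∑ j ∈ range (n + 1), q j = 1) :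
    W1 (∑ j ∈ range (n + 1), ENNReal.ofReal (p j) • Measure.dirac (t j))
      (∑ j ∈ range (n + 1), ENNReal.ofReal (q j) • Measure.dirac (t j))
      ≤ ∑ r ∈ range n, |t (r + 1) - t r| * |∑ j ∈ range (r + 1), (p j - q j)| := by
  have hmap : ∀ w : ℕ → ℝ, (∀ j, 0 ≤ w j) → ∑ j ∈ range (n + 1), w j = 1 →
      (volume.restrict (Set.Ico 0 1)).map (stepQuantile t (fun m => ∑ j ∈ range m, w j) n)
        = ∑ j ∈ range (n + 1), ENNReal.ofReal (w j) • Measure.dirac (t j) := by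
    intro w hw hw1
    rw [map_stepQuantile (monotone_nat_of_le_succ fun m => by simp [sum_range_succ, hw m])
      (sum_range_zero w) hw1]
    simp_rw [sum_range_succ_sub_sum]
  have : IsProbabilityMeasure (volume.restrict (Set.Ico (0 : ℝ) 1)) := ⟨by simp⟩
  rw [← hmap p hp hp1, ← hmap q hq hq1]
  refine (W1_map_le _ (measurable_stepQuantile _ _ _) (measurable_stepQuantile _ _ _)).trans ?_
  simpa only [sum_sub_distrib] using integral_abs_stepQuantile_sub_le t _ _ n

namespace Finset

variable {α : Type*} [LinearOrder α] {S : Finset α} {n : ℕ}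

/-- The `j`-th smallest element of `S`, counting from `0`; indices `j > n` give the largest. -/
noncomputable def sortedNode (S : Finset α) (h : #S = n + 1) (j : ℕ) : α :=
  S.orderEmbOfFin h (Fin.clamp j n)

theorem sortedNode_mem (h : #S = n + 1) (j : ℕ) : S.sortedNode h j ∈ S :=
  orderEmbOfFin_mem S h _

theorem strictMonoOn_sortedNode (h : #S = n + 1) :
    StrictMonoOn (S.sortedNode h) (Set.Iic n) := by
  intro i hi j hj hij
  refine (S.orderEmbOfFin h).strictMono ?_
  simp [Fin.lt_def, Fin.clamp, min_eq_left (Set.mem_Iic.mp hi), min_eq_left (Set.mem_Iic.mp hj),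
    hij]

theorem sum_range_sortedNode {M : Type*} [AddCommMonoid M] (h : #S = n + 1) (F : α → M) :
    ∑ j ∈ range (n + 1), F (S.sortedNode h j) = ∑ a ∈ S, F a := by
  rw [← Fin.sum_univ_eq_sum_range (fun j => F (S.sortedNode h j)), ← sum_coe_sort S F,
    ← (S.orderIsoOfFin h).toEquiv.sum_comp]
  refine sum_congr rfl fun i _ => ?_
  simp [sortedNode, Fin.clamp, Nat.min_eq_left (Nat.lt_succ_iff.mp i.isLt)]

end Finset

section Discrete

variable {α : Type*} [MeasurableSpace α] [MeasurableSingletonClass α] {μ : Measure α}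
  [IsProbabilityMeasure μ] {S : Finset α}

theorem ae_mem_of_measure_eq_one (hS : μ S = 1) : ∀ᵐ x ∂μ, x ∈ S :=
  (prob_compl_eq_zero_iff S.finite_toSet.measurableSet).mpr hS

variable [LinearOrder α] {n : ℕ}

theorem eq_sum_smul_dirac_sortedNode (hS : μ S = 1) (h : #S = n + 1) :
    μ = ∑ j ∈ range (n + 1),
      ENNReal.ofReal (μ.real {S.sortedNode h j}) • Measure.dirac (S.sortedNode h j) := by
  rw [sum_range_sortedNode h fun a => ENNReal.ofReal (μ.real {a}) • Measure.dirac a]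
  exact (Measure.ae_mem_finset_iff.mp (ae_mem_of_measure_eq_one hS)).trans
    (sum_congr rfl fun a _ => by rw [ofReal_measureReal])

theorem integral_eq_sum_sortedNode (hS : μ S = 1) (h : #S = n + 1) (f : α → ℝ) :
    ∫ x, f x ∂μ = ∑ j ∈ range (n + 1), μ.real {S.sortedNode h j} * f (S.sortedNode h j) := by
  rw [sum_range_sortedNode h fun a => μ.real {a} * f a]
  conv_lhs => rw [← Measure.restrict_eq_self_of_ae_mem (ae_mem_of_measure_eq_one hS)]
  exact setIntegral_finset S IntegrableOn.finset

theorem sum_measureReal_sortedNode (hS : μ S = 1) (h : #S = n + 1) :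
    ∑ j ∈ range (n + 1), μ.real {S.sortedNode h j} = 1 := by
  simpa using (integral_eq_sum_sortedNode hS h fun _ => 1).symm

end Discrete

theorem W1_sum_smul_dirac_le_of_moments {n : ℕ} {t p q : ℕ → ℝ} {θ : ℝ}
    (ht : StrictMonoOn t (Set.Iic n)) (htb : ∀ j ≤ n, |t j| ≤ 1)
    (hp : ∀ j, 0 ≤ p j) (hq : ∀ j, 0 ≤ q j)
    (hp1 : ∑ j ∈ range (n + 1), p j = 1) (hq1 : ∑ j ∈ range (n + 1), q j = 1) (hθ : 0 ≤ θ)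
    (hM : ∀ i, 1 ≤ i → i ≤ n →
      |∑ j ∈ range (n + 1), p j * t j ^ i - ∑ j ∈ range (n + 1), q j * t j ^ i| ≤ θ ^ n) :
    W1 (∑ j ∈ range (n + 1), ENNReal.ofReal (p j) • Measure.dirac (t j))
      (∑ j ∈ range (n + 1), ENNReal.ofReal (q j) • Measure.dirac (t j)) ≤ 8 * n * θ := by
  have hM' : ∀ i ≤ n, |∑ j ∈ range (n + 1), (p j - q j) * t j ^ i| ≤ θ ^ n := by
    intro i hi
    simp_rw [sub_mul, sum_sub_distrib]
    rcases i.eq_zero_or_pos with rfl | hi1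
    · simp [hp1, hq1, pow_nonneg hθ]
    · exact hM i hi1 hi
  have hU : ∀ r < n, |∑ j ∈ range (r + 1), (p j - q j)| ≤ 1 := by
    intro r hr
    have hle : ∀ w : ℕ → ℝ, (∀ j, 0 ≤ w j) → ∑ j ∈ range (n + 1), w j = 1 →
        ∑ j ∈ range (r + 1), w j ∈ Set.Icc 0 1 := fun w hw hw1 =>
      ⟨sum_nonneg fun j _ => hw j, hw1 ▸ sum_le_sum_of_subset_of_nonneg
        (range_subset_range.mpr (by omega)) fun j _ _ => hw j⟩
    obtain ⟨hp₀, hp₁⟩ := hle p hp hp1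
    obtain ⟨hq₀, hq₁⟩ := hle q hq hq1
    rw [sum_sub_distrib, abs_le]
    constructor <;> linarith
  calc _ ≤ ∑ r ∈ range n, |t (r + 1) - t r| * |∑ j ∈ range (r + 1), (p j - q j)| :=
        W1_sum_smul_dirac_le t p q n hp hq hp1 hq1
    _ ≤ ∑ r ∈ range n, 8 * θ := sum_le_sum fun r hr =>
        gap_mul_abs_sum_range_le ht htb (mem_range.mp hr) hθ hM' (hU r (mem_range.mp hr))
    _ = 8 * n * θ := by rw [sum_const, card_range, nsmul_eq_mul]; ring

theorem stmt_16 (ℓ : ℕ) (S : Finset ℝ) (hcard : S.card = ℓ)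
    (hS : ↑S ⊆ Set.Icc (-1 : ℝ) 1)
    (ν ν' : Measure ℝ) [IsProbabilityMeasure ν] [IsProbabilityMeasure ν']
    (hsupp : ν ↑S = 1) (hsupp' : ν' ↑S = 1)
    (δ : ℝ)
    (hm : ∀ i, 1 ≤ i → i ≤ ℓ - 1 → |∫ x, x ^ i ∂ν - ∫ x, x ^ i ∂ν'| ≤ δ) :
    W1 ν ν' ≤ 4 * Real.exp 1 * ℓ * δ ^ (((ℓ : ℝ) - 1)⁻¹) := by
  have hne : S.Nonempty := nonempty_iff_ne_empty.mpr fun h => by simp [h] at hsupp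
  obtain ⟨n, rfl⟩ := Nat.exists_eq_add_one.mpr (hcard ▸ hne.card_pos)
  rw [show ((n + 1 : ℕ) : ℝ) - 1 = n by push_cast; ring]
  set θ := δ ^ (n : ℝ)⁻¹
  have hθ : 0 ≤ θ := by
    rcases n.eq_zero_or_pos with rfl | hn
    · simp [θ]
    · exact Real.rpow_nonneg ((abs_nonneg _).trans (hm 1 le_rfl (by omega))) _
  calc W1 ν ν' ≤ 8 * n * θ := by
        rw [eq_sum_smul_dirac_sortedNode hsupp hcard, eq_sum_smul_dirac_sortedNode hsupp' hcard]
        refine W1_sum_smul_dirac_le_of_moments (S.strictMonoOn_sortedNode hcard)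
          (fun j _ => abs_le.mpr (hS (S.sortedNode_mem hcard j))) (fun _ => measureReal_nonneg)
          (fun _ => measureReal_nonneg) (sum_measureReal_sortedNode hsupp hcard)
          (sum_measureReal_sortedNode hsupp' hcard) hθ fun i hi hin => ?_
        have hδ := hm i hi (by omega)
        rwa [integral_eq_sum_sortedNode hsupp hcard, integral_eq_sum_sortedNode hsupp' hcard,
          ← Real.rpow_inv_natCast_pow (n := n) ((abs_nonneg _).trans hδ) (by omega)] at hδ
    _ ≤ 4 * Real.exp 1 * ((n + 1 : ℕ) : ℝ) * θ := by
        have he : 2 ≤ Real.exp 1 := by linarith [Real.add_one_le_exp 1]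
        push_cast
        calc 8 * (n : ℝ) * θ ≤ 4 * 2 * (n + 1) * θ := by linarith
          _ ≤ _ := by gcongr
end

section
/- Let π = ν * N(0, τ²) be the convolution of a probability distribution ν supported on [−1,1] with a centered Gaussian of variance τ², and let π' be a k-atomic probability distribution supported on [−1,1]. If |m_i(π) − m_i(π')| ≤ ε for all i = 1, …, 2k, then τ ≤ 2 (ε / k!)^{1/(2k)}. -/
open MeasureTheory ProbabilityTheory

/-!
Let `Q = ∏ (X - a)` over the atoms of `π'`, padded with zeros to degree `k`, so that `Q²` vanishes
`π'`-a.e. Expanding `Q²` in monomials, `∫ Q² dπ = ∫ Q² dπ - ∫ Q² dπ'` is at most `ε` times the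
`ℓ¹` norm of its coefficients, which is at most `2 ^ (2k)` because the roots lie in `[-1, 1]`.
Conversely, `π` is a mixture of the Gaussians `N(x, τ²)`, and a monic `q` of degree `k` has
`∫ q² dN(m, v) ≥ k! vᵏ`: after rescaling to `Z ∼ N(0, 1)`, repeated Stein identities
`E[Z f(Z)] = E[f'(Z)]` give `E[q(Z) Hₖ(Z)] = E[q⁽ᵏ⁾(Z)] = k!` for the Hermite polynomial `Hₖ`,
and `E[(q - Hₖ)(Z)²] ≥ 0` gives the bound. Hence `k! τ^(2k) ≤ ∫ Q² dπ ≤ 2^(2k) ε`.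
-/

open Polynomial Real Finset
open scoped NNReal ENNReal Nat

section Moments

variable {μ : Measure ℝ}

lemma integrable_pow_of_memLp_id [IsFiniteMeasure μ] {n : ℕ} (h : MemLp id n μ) :
    Integrable (fun x : ℝ => x ^ n) μ :=
  (integrable_norm_iff (by fun_prop)).1 (by simpa using h.integrable_norm_pow')

lemma memLp_id_of_ae_mem_Icc [IsFiniteMeasure μ] (h : ∀ᵐ x ∂μ, x ∈ Set.Icc (-1 : ℝ) 1)
    (p : ℝ≥0∞) : MemLp id p μ :=
  MemLp.of_bound aestronglyMeasurable_id 1 (h.mono fun _ hx => abs_le.2 hx)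

lemma memLp_id_map_add_prod {ν : Measure ℝ} [IsFiniteMeasure μ] [IsFiniteMeasure ν] {p : ℝ≥0∞}
    (hμ : MemLp id p μ) (hν : MemLp id p ν) :
    MemLp id p ((μ.prod ν).map (fun z => z.1 + z.2)) := by
  rw [memLp_map_measure_iff aestronglyMeasurable_id (by fun_prop)]
  exact (hμ.comp_fst ν).add (hν.comp_snd μ)

lemma Polynomial.integrable_eval (hμ : ∀ n : ℕ, Integrable (fun x : ℝ => x ^ n) μ) (p : ℝ[X]) :
    Integrable (fun x => p.eval x) μ := by
  simp_rw [eval_eq_sum_range]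
  exact integrable_finsetSum _ fun i _ => (hμ i).const_mul _

lemma Polynomial.integral_eval_eq_sum_moments (hμ : ∀ n : ℕ, Integrable (fun x : ℝ => x ^ n) μ)
    {p : ℝ[X]} {N : ℕ} (hp : p.natDegree < N) :
    ∫ x, p.eval x ∂μ = ∑ i ∈ range N, p.coeff i * ∫ x, x ^ i ∂μ := by
  simp_rw [eval_eq_sum_range' hp]
  rw [integral_finsetSum _ fun i _ => (hμ i).const_mul _]
  simp_rw [integral_const_mul]

lemma integral_eval_sub_integral_eval_le {μ' : Measure ℝ} [IsProbabilityMeasure μ]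
    [IsProbabilityMeasure μ'] (hμ : ∀ n : ℕ, Integrable (fun x : ℝ => x ^ n) μ)
    (hμ' : ∀ n : ℕ, Integrable (fun x : ℝ => x ^ n) μ') {ε : ℝ} (hε : 0 ≤ ε) {N : ℕ}
    (hm : ∀ i, 1 ≤ i → i ≤ N → |(∫ x, x ^ i ∂μ) - ∫ x, x ^ i ∂μ'| ≤ ε)
    {p : ℝ[X]} (hp : p.natDegree ≤ N) :
    ∫ x, p.eval x ∂μ - ∫ x, p.eval x ∂μ' ≤ ε * ∑ i ∈ range (N + 1), |p.coeff i| := by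
  rw [p.integral_eval_eq_sum_moments hμ (Nat.lt_succ_of_le hp),
    p.integral_eval_eq_sum_moments hμ' (Nat.lt_succ_of_le hp), ← sum_sub_distrib, mul_sum]
  refine sum_le_sum fun i hi => ?_
  rcases Nat.eq_zero_or_pos i with rfl | hi₀
  · simp only [pow_zero, integral_const, probReal_univ, smul_eq_mul, mul_one, sub_self]
    positivity
  · rw [← mul_sub, mul_comm ε]
    calc p.coeff i * ((∫ x, x ^ i ∂μ) - ∫ x, x ^ i ∂μ')
        ≤ |p.coeff i| * |(∫ x, x ^ i ∂μ) - ∫ x, x ^ i ∂μ'| := by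
          rw [← abs_mul]; exact le_abs_self _
      _ ≤ |p.coeff i| * ε := by
          gcongr; exact hm i hi₀ (Nat.lt_succ_iff.1 (mem_range.1 hi))

end Moments

lemma sum_range_abs_coeff_X_mul_le (N : ℕ) (p : ℝ[X]) :
    ∑ i ∈ range N, |(X * p).coeff i| ≤ ∑ i ∈ range N, |p.coeff i| := by
  cases N with
  | zero => simp
  | succ n =>
    rw [sum_range_succ', sum_range_succ]
    simp only [coeff_X_mul, coeff_X_mul_zero, abs_zero, add_zero]
    exact le_add_of_nonneg_right (abs_nonneg _)

lemma sum_range_abs_coeff_prod_X_sub_C_le (N : ℕ) (M : Multiset ℝ) (hM : ∀ a ∈ M, |a| ≤ 1) :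
    ∑ i ∈ range N, |(M.map (X - C ·)).prod.coeff i| ≤ 2 ^ Multiset.card M := by
  induction M using Multiset.induction_on with
  | empty =>
    simp only [Multiset.map_zero, Multiset.prod_zero, Multiset.card_zero, pow_zero, coeff_one]
    simp only [apply_ite, abs_one, abs_zero, sum_ite_eq', mem_range]
    split_ifs <;> norm_num
  | cons a M ih =>
    set Q := (M.map (X - C ·)).prod
    have ha : |a| ≤ 1 := hM a (Multiset.mem_cons_self a M)
    have hQ := ih fun b hb => hM b (Multiset.mem_cons_of_mem hb)
    rw [Multiset.map_cons, Multiset.prod_cons, Multiset.card_cons, pow_succ]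
    calc ∑ i ∈ range N, |((X - C a) * Q).coeff i|
        ≤ ∑ i ∈ range N, (|(X * Q).coeff i| + |a| * |Q.coeff i|) := by
          gcongr with i
          rw [sub_mul, coeff_sub, coeff_C_mul, ← abs_mul]
          exact abs_sub _ _
      _ ≤ ∑ i ∈ range N, |Q.coeff i| + ∑ i ∈ range N, |Q.coeff i| := by
          rw [sum_add_distrib, ← mul_sum]
          exact add_le_add (sum_range_abs_coeff_X_mul_le N Q)
            (mul_le_of_le_one_left (sum_nonneg fun _ _ => abs_nonneg _) ha)
      _ ≤ 2 ^ Multiset.card M * 2 := by linarith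

lemma exists_monic_isRoot_sum_abs_coeff_sq_le {S : Finset ℝ} (hS : ↑S ⊆ Set.Icc (-1 : ℝ) 1)
    {k : ℕ} (hk : S.card ≤ k) :
    ∃ Q : ℝ[X], Q.Monic ∧ Q.natDegree = k ∧ (∀ a ∈ S, Q.IsRoot a) ∧
      ∑ i ∈ range (2 * k + 1), |(Q ^ 2).coeff i| ≤ 2 ^ (2 * k) := by
  set M := S.val + Multiset.replicate (k - S.card) 0
  have hcard : Multiset.card M = k := by simp [M]; omega
  have hM : ∀ a ∈ M, |a| ≤ 1 := by
    intro a ha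
    rcases Multiset.mem_add.1 ha with h | h
    · exact abs_le.2 (hS h)
    · simp [Multiset.eq_of_mem_replicate h]
  refine ⟨(M.map (X - C ·)).prod, monic_multiset_prod_of_monic _ _ fun a _ => monic_X_sub_C a,
    by rw [natDegree_multiset_prod_X_sub_C_eq_card, hcard], fun a ha => ?_, ?_⟩
  · refine isRoot_of_mem_roots ?_
    rw [roots_multiset_prod_X_sub_C]
    exact Multiset.mem_add.2 (Or.inl ha)
  · rw [sq, ← Multiset.prod_add, ← Multiset.map_add]
    simpa [hcard, two_mul] using sum_range_abs_coeff_prod_X_sub_C_le _ (M + M)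
      fun a ha => (Multiset.mem_add.1 ha).elim (hM a) (hM a)

lemma integrable_pow_gaussianReal (m : ℝ) (v : ℝ≥0) (n : ℕ) :
    Integrable (fun x : ℝ => x ^ n) (gaussianReal m v) :=
  integrable_pow_of_memLp_id (memLp_id_gaussianReal n)

lemma hasDerivAt_gaussianPDFReal_zero_one (x : ℝ) :
    HasDerivAt (gaussianPDFReal 0 1) (-x * gaussianPDFReal 0 1 x) x := by
  have h : HasDerivAt (fun y : ℝ => y ^ 2 / (-2)) (-x) x :=
    ((hasDerivAt_pow 2 x).div_const (-2)).congr_deriv (by norm_num; ring)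
  have e : gaussianPDFReal 0 1 = fun y => (√(2 * π))⁻¹ * rexp (y ^ 2 / (-2)) := by
    ext y; simp [gaussianPDFReal_def, neg_div, div_neg]
  rw [e]
  exact (h.exp.const_mul _).congr_deriv (by ring)

lemma integrable_gaussianPDFReal_mul {f : ℝ → ℝ} (hf : Integrable f (gaussianReal 0 1)) :
    Integrable (fun x => gaussianPDFReal 0 1 x * f x) := by
  rw [gaussianReal_of_var_ne_zero _ one_ne_zero, gaussianPDF_def,
    integrable_withDensity_iff_integrable_smul' (by fun_prop) (by simp)] at hf
  simpa [ENNReal.toReal_ofReal (gaussianPDFReal_nonneg _ _ _)] using hf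

noncomputable def stdGaussianExpectation : ℝ[X] →ₗ[ℝ] ℝ where
  toFun p := ∫ x, p.eval x ∂gaussianReal 0 1
  map_add' p q := by
    simp only [eval_add]
    exact integral_add (p.integrable_eval (integrable_pow_gaussianReal 0 1))
      (q.integrable_eval (integrable_pow_gaussianReal 0 1))
  map_smul' c p := by simp [integral_const_mul]

lemma stdGaussianExpectation_apply (p : ℝ[X]) :
    stdGaussianExpectation p = ∫ x, p.eval x ∂gaussianReal 0 1 := rfl

lemma stdGaussianExpectation_C (c : ℝ) : stdGaussianExpectation (C c) = c := by
  simp [stdGaussianExpectation_apply]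

lemma stdGaussianExpectation_mul_self_nonneg (p : ℝ[X]) : 0 ≤ stdGaussianExpectation (p * p) :=
  integral_nonneg fun x => by simpa using mul_self_nonneg (p.eval x)

/-- Stein's identity, by integration by parts against the Gaussian density. -/
lemma stdGaussianExpectation_X_mul (p : ℝ[X]) :
    stdGaussianExpectation (X * p) = stdGaussianExpectation (derivative p) := by
  have hint (q : ℝ[X]) : Integrable (fun x => gaussianPDFReal 0 1 x * q.eval x) :=
    integrable_gaussianPDFReal_mul (q.integrable_eval (integrable_pow_gaussianReal 0 1))
  have ibp := integral_mul_deriv_eq_deriv_mul_of_integrable (u := fun x => p.eval x)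
    (fun x _ => p.hasDerivAt x) (fun x _ => hasDerivAt_gaussianPDFReal_zero_one x)
    ((hint (X * p)).neg.congr (ae_of_all _ fun x => by simp; ring))
    ((hint (derivative p)).congr (ae_of_all _ fun x => by simp; ring))
    ((hint p).congr (ae_of_all _ fun x => by simp; ring))
  simp only [stdGaussianExpectation_apply, integral_gaussianReal_eq_integral_smul one_ne_zero,
    smul_eq_mul]
  calc ∫ x, gaussianPDFReal 0 1 x * (X * p).eval x
      = -∫ x, p.eval x * (-x * gaussianPDFReal 0 1 x) := by
        rw [← integral_neg]; congr 1; ext x; simp; ring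
    _ = ∫ x, gaussianPDFReal 0 1 x * (derivative p).eval x := by
        rw [ibp, neg_neg]; simp_rw [mul_comm]

noncomputable def realHermite (k : ℕ) : ℝ[X] := (hermite k).map (Int.castRingHom ℝ)

lemma realHermite_succ (k : ℕ) :
    realHermite (k + 1) = X * realHermite k - derivative (realHermite k) := by
  simp [realHermite, hermite_succ, derivative_map]

lemma realHermite_monic (k : ℕ) : (realHermite k).Monic := (hermite_monic k).map _

lemma natDegree_realHermite (k : ℕ) : (realHermite k).natDegree = k := by
  rw [realHermite, (hermite_monic k).natDegree_map, natDegree_hermite]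

lemma stdGaussianExpectation_mul_realHermite (k : ℕ) (p : ℝ[X]) :
    stdGaussianExpectation (p * realHermite k) = stdGaussianExpectation (derivative^[k] p) := by
  induction k generalizing p with
  | zero => simp [realHermite]
  | succ k ih =>
    have h : p * realHermite (k + 1) =
        X * (p * realHermite k) - p * derivative (realHermite k) := by
      rw [realHermite_succ]; ring
    rw [h, map_sub, stdGaussianExpectation_X_mul, derivative_mul, map_add, add_sub_cancel_right,
      ih, Function.iterate_succ_apply]

lemma Polynomial.iterate_derivative_eq_C_of_natDegree_le {R : Type*} [Semiring R] {p : R[X]}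
    {k : ℕ} (hp : p.natDegree ≤ k) : derivative^[k] p = C (k ! * p.coeff k) := by
  have h : (derivative^[k] p).natDegree = 0 :=
    Nat.eq_zero_of_le_zero ((natDegree_iterate_derivative p k).trans (by omega))
  rw [eq_C_of_natDegree_eq_zero h, coeff_iterate_derivative, zero_add, Nat.descFactorial_self,
    nsmul_eq_mul]

lemma stdGaussianExpectation_mul_realHermite_of_natDegree_le {k : ℕ} {p : ℝ[X]}
    (hp : p.natDegree ≤ k) : stdGaussianExpectation (p * realHermite k) = k ! * p.coeff k := by
  rw [stdGaussianExpectation_mul_realHermite, iterate_derivative_eq_C_of_natDegree_le hp,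
    stdGaussianExpectation_C]

lemma factorial_mul_coeff_sq_le_stdGaussianExpectation {k : ℕ} {p : ℝ[X]}
    (hp : p.natDegree ≤ k) : k ! * p.coeff k ^ 2 ≤ stdGaussianExpectation (p * p) := by
  set c := p.coeff k
  set H := realHermite k
  have hHk : H.coeff k = 1 := by
    simpa [H, natDegree_realHermite] using (realHermite_monic k).coeff_natDegree
  have hpH := stdGaussianExpectation_mul_realHermite_of_natDegree_le hp
  have hHH := stdGaussianExpectation_mul_realHermite_of_natDegree_le (natDegree_realHermite k).le
  have h := stdGaussianExpectation_mul_self_nonneg (p - c • H)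
  have e : (p - c • H) * (p - c • H) = p * p - (2 * c) • (p * H) + c ^ 2 • (H * H) := by
    simp only [smul_eq_C_mul, map_mul, map_pow, map_ofNat]; ring
  rw [e, map_add, map_sub, map_smul, map_smul, hpH, hHH, hHk] at h
  simp only [smul_eq_mul] at h
  nlinarith

lemma gaussianReal_eq_map_stdGaussian (m : ℝ) (v : ℝ≥0) :
    gaussianReal m v = (gaussianReal 0 1).map (fun z => m + √v * z) := by
  have h : (gaussianReal 0 1).map (√v * ·) = gaussianReal 0 v := by
    rw [gaussianReal_map_const_mul, mul_zero, mul_one]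
    congr
    exact sq_sqrt v.coe_nonneg
  change _ = (gaussianReal 0 1).map ((m + ·) ∘ (√v * ·))
  rw [← Measure.map_map (by fun_prop) (by fun_prop), h, gaussianReal_map_const_add, zero_add]

theorem factorial_mul_pow_le_integral_sq_gaussianReal (m : ℝ) (v : ℝ≥0) {q : ℝ[X]}
    (hq : q.Monic) :
    q.natDegree ! * (v : ℝ) ^ q.natDegree ≤ ∫ x, q.eval x ^ 2 ∂gaussianReal m v := by
  set k := q.natDegree
  set q₀ := q.comp (X + C m)
  set r := q₀.comp (C √v * X)
  have hq₀ : q₀.natDegree = k := by simp [q₀, k, natDegree_comp]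
  have hr : r.natDegree ≤ k := by
    rw [natDegree_comp, hq₀]
    simpa using Nat.mul_le_mul_left k ((natDegree_C_mul_le (√(v : ℝ)) X).trans natDegree_X_le)
  have hrk : r.coeff k = √v ^ k := by
    have h₀ : q₀.coeff k = 1 := hq₀ ▸ (hq.comp_X_add_C m).coeff_natDegree
    simp [r, h₀]
  have hint : ∫ x, q.eval x ^ 2 ∂gaussianReal m v = stdGaussianExpectation (r * r) := by
    rw [gaussianReal_eq_map_stdGaussian, integral_map (by fun_prop) (by fun_prop),
      stdGaussianExpectation_apply]
    congr 1; ext z; simp [r, q₀, eval_comp, sq, add_comm]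
  rw [hint]
  convert factorial_mul_coeff_sq_le_stdGaussianExpectation hr using 2
  rw [hrk, ← pow_mul, mul_comm, pow_mul, sq_sqrt v.coe_nonneg]

theorem factorial_mul_pow_le_integral_sq_map_add_prod (ν : Measure ℝ) [IsProbabilityMeasure ν]
    (v : ℝ≥0) {q : ℝ[X]} (hq : q.Monic)
    (hint : Integrable (fun x => q.eval x ^ 2)
      ((ν.prod (gaussianReal 0 v)).map (fun z => z.1 + z.2))) :
    q.natDegree ! * (v : ℝ) ^ q.natDegree ≤
      ∫ x, q.eval x ^ 2 ∂(ν.prod (gaussianReal 0 v)).map (fun z => z.1 + z.2) := by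
  have hadd : AEMeasurable (fun z : ℝ × ℝ => z.1 + z.2) (ν.prod (gaussianReal 0 v)) := by
    fun_prop
  have hint' : Integrable (fun z : ℝ × ℝ => q.eval (z.1 + z.2) ^ 2) (ν.prod (gaussianReal 0 v)) :=
    (integrable_map_measure (by fun_prop) hadd).1 hint
  rw [integral_map hadd (by fun_prop), integral_prod _ hint']
  calc (q.natDegree ! : ℝ) * v ^ q.natDegree
      = ∫ _, (q.natDegree ! : ℝ) * v ^ q.natDegree ∂ν := by simp
    _ ≤ _ := integral_mono (integrable_const _) hint'.integral_prod_left fun x => ?_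
  have hshift : (gaussianReal 0 v).map (x + ·) = gaussianReal x v := by
    rw [gaussianReal_map_const_add, zero_add]
  have h := factorial_mul_pow_le_integral_sq_gaussianReal x v hq
  rwa [← hshift, integral_map (by fun_prop) (by fun_prop)] at h

lemma le_two_mul_rpow_of_mul_pow_le {k : ℕ} (hk : k ≠ 0) {c t ε : ℝ} (hc : 0 < c) (ht : 0 ≤ t)
    (h : c * t ^ (2 * k) ≤ 2 ^ (2 * k) * ε) : t ≤ 2 * (ε / c) ^ (1 / (2 * (k : ℝ))) := by
  have hε : 0 ≤ ε / c := div_nonneg (nonneg_of_mul_nonneg_right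
    ((mul_nonneg hc.le (by positivity)).trans h) (by positivity)) hc.le
  have hn : 2 * k ≠ 0 := by omega
  have hexp : 1 / (2 * (k : ℝ)) = ((2 * k : ℕ) : ℝ)⁻¹ := by push_cast; rw [one_div]
  calc t = (t ^ (2 * k)) ^ (1 / (2 * (k : ℝ))) := by rw [hexp, pow_rpow_inv_natCast ht hn]
    _ ≤ (2 ^ (2 * k) * (ε / c)) ^ (1 / (2 * (k : ℝ))) := by
        gcongr
        rw [mul_div_assoc', le_div_iff₀ hc, mul_comm]
        exact h
    _ = 2 * (ε / c) ^ (1 / (2 * (k : ℝ))) := by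
        rw [mul_rpow (by positivity) hε, hexp, pow_rpow_inv_natCast zero_le_two hn]

theorem exists_monic_integral_sq_le_of_moments_close {μ π' : Measure ℝ} [IsProbabilityMeasure μ]
    [IsProbabilityMeasure π'] (hμ : ∀ n : ℕ, Integrable (fun x : ℝ => x ^ n) μ) {S : Finset ℝ}
    (hS : ↑S ⊆ Set.Icc (-1 : ℝ) 1) (hπ' : ∀ᵐ x ∂π', x ∈ (S : Set ℝ)) {k : ℕ} (hk : S.card ≤ k)
    {ε : ℝ} (hε : 0 ≤ ε) (hm : ∀ i, 1 ≤ i → i ≤ 2 * k → |(∫ x, x ^ i ∂μ) - ∫ x, x ^ i ∂π'| ≤ ε) :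
    ∃ Q : ℝ[X], Q.Monic ∧ Q.natDegree = k ∧ ∫ x, Q.eval x ^ 2 ∂μ ≤ 2 ^ (2 * k) * ε := by
  obtain ⟨Q, hQ, hQk, hQS, hQ2⟩ := exists_monic_isRoot_sum_abs_coeff_sq_le hS hk
  have hπ'_mom (n : ℕ) : Integrable (fun x : ℝ => x ^ n) π' :=
    integrable_pow_of_memLp_id (memLp_id_of_ae_mem_Icc (hπ'.mono fun _ hx => hS hx) n)
  have hπ'Q : ∫ x, (Q ^ 2).eval x ∂π' = 0 :=
    integral_eq_zero_of_ae (hπ'.mono fun x hx => by simp [(hQS x hx).eq_zero])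
  refine ⟨Q, hQ, hQk, ?_⟩
  simp_rw [← eval_pow]
  calc ∫ x, (Q ^ 2).eval x ∂μ = ∫ x, (Q ^ 2).eval x ∂μ - ∫ x, (Q ^ 2).eval x ∂π' := by
        rw [hπ'Q, sub_zero]
    _ ≤ ε * ∑ i ∈ range (2 * k + 1), |(Q ^ 2).coeff i| :=
        integral_eval_sub_integral_eval_le hμ hπ'_mom hε hm (by rw [natDegree_pow, hQk])
    _ ≤ 2 ^ (2 * k) * ε := by rw [mul_comm]; gcongr

theorem stmt_18 (k : ℕ) (hk : 1 ≤ k) (τ : NNReal)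
    (ν π' : Measure ℝ) [IsProbabilityMeasure ν] [IsProbabilityMeasure π']
    (hν : ν (Set.Icc (-1 : ℝ) 1) = 1)
    (S : Finset ℝ) (hcard : S.card ≤ k) (hS : ↑S ⊆ Set.Icc (-1 : ℝ) 1)
    (hπ' : π' ↑S = 1)
    (ε : ℝ)
    (hm : ∀ i, 1 ≤ i → i ≤ 2 * k →
      |(∫ x, x ^ i
          ∂(Measure.map (fun p : ℝ × ℝ => p.1 + p.2) (ν.prod (gaussianReal 0 (τ ^ 2))))) -
        ∫ x, x ^ i ∂π'| ≤ ε) :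
    (τ : ℝ) ≤ 2 * (ε / k.factorial) ^ (1 / (2 * (k : ℝ))) := by
  set μ := Measure.map (fun p : ℝ × ℝ => p.1 + p.2) (ν.prod (gaussianReal 0 (τ ^ 2)))
  have : IsProbabilityMeasure μ := Measure.isProbabilityMeasure_map (by fun_prop)
  have hε : 0 ≤ ε := (abs_nonneg _).trans (hm 1 le_rfl (by omega))
  have hν_ae : ∀ᵐ x ∂ν, x ∈ Set.Icc (-1 : ℝ) 1 :=
    (ae_mem_iff_measure_eq measurableSet_Icc.nullMeasurableSet).2 (by rw [hν, measure_univ])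
  have hπ'_ae : ∀ᵐ x ∂π', x ∈ (S : Set ℝ) :=
    (ae_mem_iff_measure_eq S.finite_toSet.measurableSet.nullMeasurableSet).2
      (by rw [hπ', measure_univ])
  have hμ_mom (n : ℕ) : Integrable (fun x : ℝ => x ^ n) μ := integrable_pow_of_memLp_id
    (memLp_id_map_add_prod (memLp_id_of_ae_mem_Icc hν_ae n) (memLp_id_gaussianReal n))
  obtain ⟨Q, hQ, hQk, upper⟩ :=
    exists_monic_integral_sq_le_of_moments_close hμ_mom hS hπ'_ae hcard hε hm
  have lower := factorial_mul_pow_le_integral_sq_map_add_prod ν (τ ^ 2) hQ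
    (by simp_rw [← eval_pow]; exact (Q ^ 2).integrable_eval hμ_mom)
  rw [hQk, NNReal.coe_pow, ← pow_mul] at lower
  exact le_two_mul_rpow_of_mul_pow_le (by omega) (by positivity) τ.coe_nonneg (lower.trans upper)
end

section
/- Let U and U' be random variables each taking at most k values in [−1,1], and suppose |E[U^j] − E[U'^j]| ≤ ε for j = 1, …, 2k−1. Then for every integer ℓ ≥ 2k, |E[U^ℓ] − E[U'^ℓ]| ≤ 3^ℓ ε. -/
open MeasureTheory

open Polynomial Finset Lagrange

/-! Let `T = S ∪ S'`, so `#T ≤ 2k`, and let `L` be the difference of the two moment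
functionals on `ℝ[X]`; it vanishes on polynomials vanishing on `T`. Truncating the Newton
expansion of `X ^ ℓ` on the nodes of `T` to the first `#T` basis polynomials
`N_i = ∏_{j<i} (X - t_j)` gives a polynomial interpolating `t ^ ℓ` on `T`, so
`L (X ^ ℓ) = ∑_{i<#T} c_i L N_i`. The coefficients `c_i` are divided differences of `t ^ ℓ`,
bounded by `choose ℓ i`; peeling off one factor of `N_i` at a time shows `|L N_i| ≤ 2 ^ i ε`;
and `∑ choose ℓ i 2 ^ i = 3 ^ ℓ`. -/

section NewtonForm

variable (xs : ℕ → ℝ)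

/-- The divided difference of `t ↦ t ^ m` at the nodes `xs 0, …, xs i`, i.e. the `i`-th
coefficient of `X ^ m` in the Newton basis `nodal (range i) xs`. -/
noncomputable def dividedDiffPow : ℕ → ℕ → ℝ
  | 0, 0 => 1
  | 0, _ + 1 => 0
  | m + 1, 0 => xs 0 * dividedDiffPow m 0
  | m + 1, i + 1 => xs (i + 1) * dividedDiffPow m (i + 1) + dividedDiffPow m i

theorem dividedDiffPow_eq_zero_of_lt {m i : ℕ} (h : m < i) : dividedDiffPow xs m i = 0 := by
  induction m generalizing i with
  | zero => cases i with
    | zero => omega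
    | succ i => rfl
  | succ m ih =>
    cases i with
    | zero => omega
    | succ i =>
      simp only [dividedDiffPow, ih (by omega : m < i + 1), ih (by omega : m < i), mul_zero,
        add_zero]

theorem abs_dividedDiffPow_le (hxs : ∀ i, |xs i| ≤ 1) (m i : ℕ) :
    |dividedDiffPow xs m i| ≤ m.choose i := by
  induction m generalizing i with
  | zero => cases i <;> simp [dividedDiffPow]
  | succ m ih =>
    cases i with
    | zero =>
      simpa [dividedDiffPow, abs_mul] using
        mul_le_one₀ (hxs 0) (abs_nonneg _) (by simpa using ih 0)
    | succ i =>
      calc |dividedDiffPow xs (m + 1) (i + 1)|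
          ≤ |xs (i + 1)| * |dividedDiffPow xs m (i + 1)| + |dividedDiffPow xs m i| := by
            rw [dividedDiffPow, ← abs_mul]; exact abs_add_le _ _
        _ ≤ 1 * m.choose (i + 1) + m.choose i := by
            gcongr
            · exact hxs _
            · exact ih _
            · exact ih _
        _ = (m + 1).choose (i + 1) := by rw [Nat.choose_succ_succ']; push_cast; ring

theorem X_mul_nodal_range (i : ℕ) :
    X * nodal (range i) xs = nodal (range (i + 1)) xs + C (xs i) * nodal (range i) xs := by
  rw [range_add_one, nodal_insert_eq_nodal (by simp)]
  ring

theorem X_pow_eq_sum_dividedDiffPow_mul_nodal (m : ℕ) :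
    (X : ℝ[X]) ^ m = ∑ i ∈ range (m + 1), C (dividedDiffPow xs m i) * nodal (range i) xs := by
  induction m with
  | zero => simp [dividedDiffPow, nodal]
  | succ m ih =>
    set c := dividedDiffPow xs
    have hX_mul (i : ℕ) : X * (C (c m i) * nodal (range i) xs) =
        C (c m i) * nodal (range (i + 1)) xs + C (xs i * c m i) * nodal (range i) xs := by
      rw [mul_left_comm, X_mul_nodal_range, C_mul]; ring
    have hpad : ∑ i ∈ range (m + 1), C (xs i * c m i) * nodal (range i) xs =
        ∑ i ∈ range (m + 2), C (xs i * c m i) * nodal (range i) xs := by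
      rw [sum_range_succ _ (m + 1),
        show c m (m + 1) = 0 from dividedDiffPow_eq_zero_of_lt xs m.lt_succ_self]
      simp
    rw [pow_succ', ih, mul_sum, sum_congr rfl fun i _ => hX_mul i, sum_add_distrib, hpad,
      sum_range_succ' _ (m + 1), sum_range_succ' _ (m + 1)]
    simp only [c, dividedDiffPow, C_add, add_mul, sum_add_distrib]
    ring

theorem eval_sum_dividedDiffPow_mul_nodal {n m j : ℕ} (hnm : n ≤ m + 1) (hj : j < n) :
    (∑ i ∈ range n, C (dividedDiffPow xs m i) * nodal (range i) xs).eval (xs j) = xs j ^ m := by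
  conv_rhs => rw [← eval_X (x := xs j), ← eval_pow, X_pow_eq_sum_dividedDiffPow_mul_nodal xs m]
  simp only [eval_finsetSum]
  refine sum_subset (range_subset_range.2 hnm) fun i _ hi => ?_
  rw [eval_mul, eval_nodal_at_node (mem_range.2 (by simp at hi; omega)), mul_zero]

end NewtonForm

section MomentFunctional

variable (L : ℝ[X] →ₗ[ℝ] ℝ) {xs : ℕ → ℝ} {ε : ℝ}

theorem abs_map_X_pow_mul_nodal_le (hxs : ∀ i, |xs i| ≤ 1) {d : ℕ}
    (hmom : ∀ j < d, |L (X ^ j)| ≤ ε) (i j : ℕ) (hij : i + j < d) :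
    |L (X ^ j * nodal (range i) xs)| ≤ 2 ^ i * ε := by
  induction i generalizing j with
  | zero => simpa [nodal] using hmom j (by omega)
  | succ i ih =>
    have hsplit : X ^ j * nodal (range (i + 1)) xs =
        X ^ (j + 1) * nodal (range i) xs - xs i • (X ^ j * nodal (range i) xs) := by
      rw [eq_sub_iff_add_eq, ← C_mul', pow_succ, mul_assoc, X_mul_nodal_range]; ring
    calc |L (X ^ j * nodal (range (i + 1)) xs)|
        ≤ |L (X ^ (j + 1) * nodal (range i) xs)|
            + |xs i| * |L (X ^ j * nodal (range i) xs)| := by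
          rw [hsplit, map_sub, map_smul, smul_eq_mul, ← abs_mul]; exact abs_sub _ _
      _ ≤ 2 ^ i * ε + 1 * (2 ^ i * ε) := by
          gcongr
          · exact ih (j + 1) (by omega)
          · exact hxs i
          · exact ih j (by omega)
      _ = 2 ^ (i + 1) * ε := by ring

theorem abs_map_X_pow_le_of_nodes (hxs : ∀ i, |xs i| ≤ 1) (hε : 0 ≤ ε) {n m : ℕ}
    (hnm : n ≤ m)
    (hL : ∀ P : ℝ[X], (∀ j < n, P.eval (xs j) = 0) → L P = 0)
    (hmom : ∀ j < n, |L (X ^ j)| ≤ ε) :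
    |L (X ^ m)| ≤ 3 ^ m * ε := by
  set c := dividedDiffPow xs m
  have hinterp : L (X ^ m) = L (∑ i ∈ range n, C (c i) * nodal (range i) xs) := by
    rw [← sub_eq_zero, ← map_sub]
    refine hL _ fun j hj => ?_
    rw [eval_sub, eval_sum_dividedDiffPow_mul_nodal xs (by omega) hj, eval_pow, eval_X, sub_self]
  calc |L (X ^ m)| = |∑ i ∈ range n, c i * L (nodal (range i) xs)| := by
        simp only [hinterp, map_sum, C_mul', map_smul, smul_eq_mul]
    _ ≤ ∑ i ∈ range n, (m.choose i : ℝ) * (2 ^ i * ε) := by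
        refine (abs_sum_le_sum_abs _ _).trans (sum_le_sum fun i hi => ?_)
        rw [abs_mul]
        have hnodal := abs_map_X_pow_mul_nodal_le L hxs hmom i 0 (by simpa using hi)
        rw [pow_zero, one_mul] at hnodal
        exact mul_le_mul (abs_dividedDiffPow_le xs hxs m i) hnodal (abs_nonneg _) (by positivity)
    _ ≤ ∑ i ∈ range (m + 1), (m.choose i : ℝ) * (2 ^ i * ε) :=
        sum_le_sum_of_subset_of_nonneg (range_subset_range.2 (by omega)) fun _ _ _ => by positivity
    _ = 3 ^ m * ε := by
        rw [show (3 : ℝ) = 2 + 1 by norm_num, add_pow, sum_mul]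
        refine sum_congr rfl fun i _ => ?_
        ring

theorem abs_map_X_pow_le_of_finset (hε : 0 ≤ ε) {T : Finset ℝ} (hT : ∀ t ∈ T, |t| ≤ 1)
    {m : ℕ} (hm : #T ≤ m) (hL : ∀ P : ℝ[X], (∀ t ∈ T, P.eval t = 0) → L P = 0)
    (hmom : ∀ j < #T, |L (X ^ j)| ≤ ε) :
    |L (X ^ m)| ≤ 3 ^ m * ε := by
  rcases T.eq_empty_or_nonempty with rfl | ⟨t₀, ht₀⟩
  · rw [hL _ (by simp), abs_zero]; positivity
  obtain ⟨xs, hxs, hcover⟩ :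
      ∃ xs : ℕ → ℝ, (∀ i, xs i ∈ T) ∧ ∀ t ∈ T, ∃ j < #T, xs j = t := by
    refine ⟨fun i => if h : i < #T then T.equivFin.symm ⟨i, h⟩ else t₀, fun i => ?_,
      fun t ht => ⟨T.equivFin ⟨t, ht⟩, (T.equivFin ⟨t, ht⟩).2, by simp⟩⟩
    dsimp only
    split_ifs
    exacts [Subtype.prop _, ht₀]
  refine abs_map_X_pow_le_of_nodes L (fun i => hT _ (hxs i)) hε hm (fun P hP => hL P ?_) hmom
  intro t ht
  obtain ⟨j, hj, rfl⟩ := hcover t ht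
  exact hP j hj

end MomentFunctional

theorem integrable_of_ae_mem_of_isCompact {X E : Type*} [TopologicalSpace X] [T2Space X]
    [MeasurableSpace X] [OpensMeasurableSpace X] [NormedAddCommGroup E] {μ : Measure X}
    [IsFiniteMeasureOnCompacts μ] {K : Set X} (hK : IsCompact K) (hμ : ∀ᵐ x ∂μ, x ∈ K)
    {f : X → E} (hf : ContinuousOn f K) : Integrable f μ := by
  simpa [IntegrableOn, Measure.restrict_eq_self_of_ae_mem hμ] using
    hf.integrableOn_compact hK (μ := μ)

noncomputable def integralEval (μ : Measure ℝ)
    (hμ : ∀ P : ℝ[X], Integrable (fun x => P.eval x) μ) : ℝ[X] →ₗ[ℝ] ℝ where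
  toFun P := ∫ x, P.eval x ∂μ
  map_add' P Q := by simp only [eval_add]; exact integral_add (hμ P) (hμ Q)
  map_smul' c P := by simp only [eval_smul, smul_eq_mul, integral_const_mul, RingHom.id_apply]

theorem stmt_19 (k : ℕ) (μ μ' : Measure ℝ) [IsProbabilityMeasure μ] [IsProbabilityMeasure μ']
    (S S' : Finset ℝ) (hcard : S.card ≤ k) (hcard' : S'.card ≤ k)
    (hS : ↑S ⊆ Set.Icc (-1 : ℝ) 1) (hS' : ↑S' ⊆ Set.Icc (-1 : ℝ) 1)
    (hsupp : μ ↑S = 1) (hsupp' : μ' ↑S' = 1)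
    (ε : ℝ)
    (hm : ∀ j, 1 ≤ j → j ≤ 2 * k - 1 → |∫ x, x ^ j ∂μ - ∫ x, x ^ j ∂μ'| ≤ ε) :
    ∀ ℓ : ℕ, 2 * k ≤ ℓ → |∫ x, x ^ ℓ ∂μ - ∫ x, x ^ ℓ ∂μ'| ≤ 3 ^ ℓ * ε := by
  intro ℓ hℓ
  have hμS : ∀ᵐ x ∂μ, x ∈ (S : Set ℝ) := (mem_ae_iff_prob_eq_one S.measurableSet).2 hsupp
  have hμS' : ∀ᵐ x ∂μ', x ∈ (S' : Set ℝ) := (mem_ae_iff_prob_eq_one S'.measurableSet).2 hsupp'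
  have hS_ne : S.Nonempty := by
    rw [nonempty_iff_ne_empty]; rintro rfl; simp at hsupp
  have hε : 0 ≤ ε := (abs_nonneg _).trans (hm 1 le_rfl (by have := hS_ne.card_pos; omega))
  have hcard_union : #(S ∪ S') ≤ 2 * k := (card_union_le S S').trans (by omega)
  have hint (P : ℝ[X]) : Integrable (fun x => P.eval x) μ :=
    integrable_of_ae_mem_of_isCompact S.finite_toSet.isCompact hμS P.continuous.continuousOn
  have hint' (P : ℝ[X]) : Integrable (fun x => P.eval x) μ' :=
    integrable_of_ae_mem_of_isCompact S'.finite_toSet.isCompact hμS' P.continuous.continuousOn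
  set L := integralEval μ hint - integralEval μ' hint'
  have hL_X_pow (j : ℕ) : L (X ^ j) = ∫ x, x ^ j ∂μ - ∫ x, x ^ j ∂μ' := by
    simp [L, integralEval]
  have hL (P : ℝ[X]) (hP : ∀ t ∈ S ∪ S', P.eval t = 0) : L P = 0 := by
    simp only [L, integralEval, LinearMap.sub_apply, LinearMap.coe_mk, AddHom.coe_mk]
    rw [integral_eq_zero_of_ae (hμS.mono fun x hx => hP x (mem_union_left _ hx)),
      integral_eq_zero_of_ae (hμS'.mono fun x hx => hP x (mem_union_right _ hx)), sub_zero]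
  have hmom (j : ℕ) (hj : j < #(S ∪ S')) : |L (X ^ j)| ≤ ε := by
    rcases j.eq_zero_or_pos with rfl | hj₀
    · rw [hL_X_pow]; simpa using hε
    · rw [hL_X_pow]; exact hm j hj₀ (by omega)
  have hT (t : ℝ) (ht : t ∈ S ∪ S') : |t| ≤ 1 :=
    abs_le.2 ((mem_union.1 ht).elim (fun h => hS h) (fun h => hS' h))
  simpa [hL_X_pow] using abs_map_X_pow_le_of_finset L hε hT (hcard_union.trans hℓ) hL hmom
end
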